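/- arXiv:0906.4536 — 3 statements merged into one kernel-verified Lean document; each statement's English description precedes it below -/
import Mathlib

section
/- For every integer m ≥ 1 and every real number θ with cos θ ≠ 0, the evaluation of the polynomial T̂_{2m} at the real number 1/(4cos²θ) equals 2cos(2mθ) / (2cosθ)^{2m}. -/
/-- `Tnat` is the shifted recursion: `Tnat (m+1) = Tpoly m`. -/
noncomputable def Tnat : ℕ → Polynomial ℤ
  | 0 => 1
  | 1 => 1
  | (n + 2) => Tnat (n + 1) - Polynomial.X * Tnat n

/-- `Tpoly m = 1` for `m ≤ 0` and `Tpoly m = Tpoly (m-1) - X * Tpoly (m-2)` for `m ≥ 1`. -/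
noncomputable def Tpoly (m : ℤ) : Polynomial ℤ := Tnat (m + 1).toNat

/-- `T̂_{2m} = T_{2m-1} - t·T_{2m-3}`, for `m ≥ 1`. -/
noncomputable def Thatpoly (m : ℤ) : Polynomial ℤ :=
  Tpoly (2 * m - 1) - Polynomial.X * Tpoly (2 * m - 3)

/-! With `x = 1 / (4c²)`, the rescaled values `(2c)ⁿ · T_{n-1}(x)` satisfy the recursion
`uₙ₊₂ = 2c · uₙ₊₁ - uₙ` with `u₀ = 1`, `u₁ = 2c`, so they are the Chebyshev values `Uₙ(c)`.
Hence `(2c)^{2m} · T̂_{2m}(x) = U_{2m}(c) - U_{2m-2}(c) = 2 T_{2m}(c)`, which is `2 cos (2mθ)`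
for `c = cos θ`. -/

open Polynomial Polynomial.Chebyshev

theorem Thatpoly_natCast_add_one (n : ℕ) :
    Thatpoly (n + 1) = Tnat (2 * n + 2) - X * Tnat (2 * n) := by
  simp only [Thatpoly, Tpoly]
  congr 3 <;> omega

section

variable {R : Type*} [CommRing R] {c x : R}

theorem aeval_Tnat_mul_two_mul_pow (h : 4 * c ^ 2 * x = 1) :
    ∀ n : ℕ, aeval x (Tnat n) * (2 * c) ^ n = (U R n).eval c
  | 0 => by simp [Tnat]
  | 1 => by simp [Tnat]
  | n + 2 => by
    have ih₁ := aeval_Tnat_mul_two_mul_pow h (n + 1)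
    have ih₀ := aeval_Tnat_mul_two_mul_pow h n
    push_cast at ih₁ ⊢
    rw [U_add_two]
    simp only [eval_sub, eval_mul, eval_X, eval_ofNat, ← ih₁, ← ih₀]
    simp only [Tnat, map_sub, map_mul, aeval_X]
    linear_combination (-(aeval x (Tnat n) * (2 * c) ^ n)) * h

theorem aeval_Thatpoly_natCast_add_one_mul_two_mul_pow (h : 4 * c ^ 2 * x = 1) (n : ℕ) :
    aeval x (Thatpoly (n + 1)) * (2 * c) ^ (2 * n + 2) = 2 * (T R (2 * n + 2)).eval c := by
  have hU₂ := aeval_Tnat_mul_two_mul_pow h (2 * n + 2)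
  have hU₀ := aeval_Tnat_mul_two_mul_pow h (2 * n)
  have hTU := congrArg (eval c) (two_mul_T_eq_U_sub_U R (2 * n : ℤ))
  push_cast at hU₂ hU₀
  simp only [eval_mul, eval_ofNat, eval_sub] at hTU
  rw [Thatpoly_natCast_add_one, hTU, ← hU₂, ← hU₀, map_sub, map_mul, aeval_X]
  linear_combination -(aeval x (Tnat (2 * n)) * (2 * c) ^ (2 * n)) * h

end

theorem stmt1 (m : ℤ) (hm : 1 ≤ m) (θ : ℝ) (hc : Real.cos θ ≠ 0) :
    Polynomial.aeval (1 / (4 * Real.cos θ ^ 2)) (Thatpoly m)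
      = 2 * Real.cos (2 * (m : ℝ) * θ) / (2 * Real.cos θ) ^ (2 * m) := by
  obtain ⟨n, rfl⟩ : ∃ n : ℕ, m = n + 1 := ⟨(m - 1).toNat, by omega⟩
  have h : 4 * Real.cos θ ^ 2 * (1 / (4 * Real.cos θ ^ 2)) = 1 := mul_one_div_cancel (by positivity)
  have hexp : 2 * ((n : ℤ) + 1) = ((2 * n + 2 : ℕ) : ℤ) := by push_cast; ring
  rw [hexp, zpow_natCast, eq_div_iff (pow_ne_zero _ (by simpa using hc)),
    aeval_Thatpoly_natCast_add_one_mul_two_mul_pow h, T_real_cos]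
  push_cast
  ring_nf
end

section
/- For every integer m ≥ 1, the identity (1 + 𝒟_m(t)) · T_m(t) = T_{m−1}(t) holds in the ring of formal power series ℤ[[t]], where the polynomials T_m are regarded as power series. -/
/-- A triangular-lattice directed animal over positions `Q ⊆ ℤ` with source `S`:
sites on line `0` are exactly the source, and every higher site is supported at
the left, at the right, or at the center (two lines below). -/
def IsTriAnimal (Q : Set ℤ) (S : Finset ℤ) (A : Finset (ℤ × ℕ)) : Prop :=
  (∀ x ∈ A, x.1 ∈ Q) ∧
  (∀ q : ℤ, (q, 0) ∈ A ↔ q ∈ S) ∧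
  ∀ x ∈ A, 1 ≤ x.2 →
    (x.1 - 1, x.2 - 1) ∈ A ∨ (x.1 + 1, x.2 - 1) ∈ A ∨ (2 ≤ x.2 ∧ (x.1, x.2 - 2) ∈ A)

/-- A square-lattice directed animal over positions `Q ⊆ ℤ` with source `S`. -/
def IsSqAnimal (Q : Set ℤ) (S : Finset ℤ) (A : Finset (ℤ × ℕ)) : Prop :=
  (∀ x ∈ A, x.1 ∈ Q) ∧
  (∀ q : ℤ, (q, 0) ∈ A ↔ q ∈ S) ∧
  ∀ x ∈ A, 1 ≤ x.2 →
    (x.1 - 1, x.2 - 1) ∈ A ∨ (x.1 + 1, x.2 - 1) ∈ A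

/-- Number of triangular-lattice directed animals over `Q` with source `S` and area `n`. -/
noncomputable def triCount (Q : Set ℤ) (S : Finset ℤ) (n : ℕ) : ℕ :=
  {A : Finset (ℤ × ℕ) | IsTriAnimal Q S A ∧ A.card = n}.ncard

/-- Number of square-lattice directed animals over `Q` with source `S` and area `n`. -/
noncomputable def sqCount (Q : Set ℤ) (S : Finset ℤ) (n : ℕ) : ℕ :=
  {A : Finset (ℤ × ℕ) | IsSqAnimal Q S A ∧ A.card = n}.ncard

/-- Generating function of triangular-lattice directed animals over `Q` with source `S`. -/
noncomputable def triGF (Q : Set ℤ) (S : Finset ℤ) : PowerSeries ℤ :=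
  PowerSeries.mk fun n => (triCount Q S n : ℤ)

/-- Generating function of square-lattice directed animals over `Q` with source `S`. -/
noncomputable def sqGF (Q : Set ℤ) (S : Finset ℤ) : PowerSeries ℤ :=
  PowerSeries.mk fun n => (sqCount Q S n : ℤ)

/-!
Removing the source `(0,0)` splits a width-`m` animal `A` in two: the cells reachable by upward
steps from the cells of column `0` above the source, and the rest. Letting the first part fall
onto the floor, as in a heap of pieces, gives an animal of width `m` (or nothing); the rest,
moved one column left and one level down, is an animal of width `m - 1` (or nothing). Conversely,
dropping the first animal onto the source together with the raised second one rebuilds `A`,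
because, by a parity argument, every cell of an animal sits exactly on its highest support. Hence
`D_m = t (1 + D_m) (1 + D_{m-1})`, and the identity follows by induction on `m` from the
recurrence `T_{m+1} = T_m - t T_{m-1}`, starting from `D_0 = 0`.
-/

open Finset

namespace TriAnimal

def gap (p q : ℤ) : ℕ := if p = q then 2 else 1

theorem one_le_gap (p q : ℤ) : 1 ≤ gap p q := by
  unfold gap; split_ifs <;> omega

theorem gap_le_two (p q : ℤ) : gap p q ≤ 2 := by
  unfold gap; split_ifs <;> omega

theorem gap_add_add (p q d : ℤ) : gap (p + d) (q + d) = gap p q := by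
  simp only [gap, add_left_inj]

theorem level_induction {P : ℤ × ℕ → Prop} (h : ∀ x, (∀ y : ℤ × ℕ, y.2 < x.2 → P y) → P x)
    (x : ℤ × ℕ) : P x :=
  (measure Prod.snd).wf.induction x h

theorem supportClause_iff {A : Finset (ℤ × ℕ)} {x : ℤ × ℕ} (hx : 1 ≤ x.2) :
    ((x.1 - 1, x.2 - 1) ∈ A ∨ (x.1 + 1, x.2 - 1) ∈ A ∨ (2 ≤ x.2 ∧ (x.1, x.2 - 2) ∈ A)) ↔
      ∃ y ∈ A, |x.1 - y.1| ≤ 1 ∧ y.2 + gap x.1 y.1 = x.2 := by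
  constructor
  · rintro (h | h | ⟨h2, h⟩) <;>
      exact ⟨_, h, by simp only [abs_le]; omega, by simp only [gap]; split_ifs <;> omega⟩
  · rintro ⟨y, hy, hxy, hgap⟩
    rw [abs_le] at hxy
    unfold gap at hgap
    split_ifs at hgap with hcol
    · exact Or.inr (Or.inr ⟨by omega, by convert hy using 1; ext <;> simp <;> omega⟩)
    · rcases (by omega : y.1 = x.1 - 1 ∨ y.1 = x.1 + 1) with h | h
      · exact Or.inl (by convert hy using 1; ext <;> simp <;> omega)
      · exact Or.inr (Or.inl (by convert hy using 1; ext <;> simp <;> omega))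

theorem isTriAnimal_iff {Q : Set ℤ} {S : Finset ℤ} {A : Finset (ℤ × ℕ)} :
    IsTriAnimal Q S A ↔ (∀ x ∈ A, x.1 ∈ Q) ∧ (∀ q : ℤ, (q, 0) ∈ A ↔ q ∈ S) ∧
      ∀ x ∈ A, 1 ≤ x.2 → ∃ y ∈ A, |x.1 - y.1| ≤ 1 ∧ y.2 + gap x.1 y.1 = x.2 :=
  and_congr_right fun _ => and_congr_right fun _ =>
    forall₂_congr fun _ _ => forall_congr' supportClause_iff

section Animal

variable {Q : Set ℤ} {S : Finset ℤ} {s : ℤ} {A : Finset (ℤ × ℕ)} {x y : ℤ × ℕ}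

theorem _root_.IsTriAnimal.exists_support (hA : IsTriAnimal Q S A) (hx : x ∈ A)
    (h1 : 1 ≤ x.2) : ∃ y ∈ A, |x.1 - y.1| ≤ 1 ∧ y.2 + gap x.1 y.1 = x.2 :=
  (isTriAnimal_iff.mp hA).2.2 x hx h1

theorem _root_.IsTriAnimal.source_mem (hA : IsTriAnimal Q {s} A) : (s, 0) ∈ A :=
  (hA.2.1 s).mpr (mem_singleton_self s)

theorem _root_.IsTriAnimal.eq_source (hA : IsTriAnimal Q {s} A) (hx : x ∈ A) (h0 : x.2 = 0) :
    x = (s, 0) := by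
  have : x.1 ∈ ({s} : Finset ℤ) := (hA.2.1 x.1).mp (by rwa [← h0])
  exact Prod.ext (mem_singleton.mp this) h0

theorem _root_.IsTriAnimal.parity (hA : IsTriAnimal Q {s} A) (hx : x ∈ A) :
    (x.1 + x.2 - s) % 2 = 0 := by
  induction x using level_induction with
  | h x ih =>
    rcases Nat.eq_zero_or_pos x.2 with h0 | hpos
    · rw [hA.eq_source hx h0]; simp
    · obtain ⟨y, hy, hxy, hgap⟩ := hA.exists_support hx hpos
      have := ih y (by have := one_le_gap x.1 y.1; omega) hy
      rw [abs_le] at hxy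
      unfold gap at hgap
      split_ifs at hgap <;> omega

theorem _root_.IsTriAnimal.level_add_gap_le (hA : IsTriAnimal Q {s} A) (hx : x ∈ A) (hy : y ∈ A)
    (hlt : y.2 < x.2) : y.2 + gap x.1 y.1 ≤ x.2 := by
  have := hA.parity hx
  have := hA.parity hy
  unfold gap
  split_ifs <;> omega

def LevelSeparated (U : Finset (ℤ × ℕ)) : Prop :=
  ∀ u ∈ U, ∀ v ∈ U, |u.1 - v.1| ≤ 1 → u.2 = v.2 → u = v

theorem LevelSeparated.mono {U : Finset (ℤ × ℕ)} (hA : LevelSeparated A) (hUA : U ⊆ A) :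
    LevelSeparated U :=
  fun u hu v hv => hA u (hUA hu) v (hUA hv)

theorem _root_.IsTriAnimal.levelSeparated (hA : IsTriAnimal Q {s} A) : LevelSeparated A := by
  intro u hu v hv huv hlevel
  have := hA.parity hu
  have := hA.parity hv
  rw [abs_le] at huv
  exact Prod.ext (by omega) hlevel

end Animal

section Drop

variable {D D' U : Finset (ℤ × ℕ)} {x y u : ℤ × ℕ}

/-- The level at which the cell `x` of `U` comes to rest when the cells of `U` fall vertically,
lowest first, onto the fixed cells of `D`: it stops `gap` levels above the highest cell already
in place in its own or an adjacent column. -/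
def dropLevel (D U : Finset (ℤ × ℕ)) (x : ℤ × ℕ) : ℕ :=
  max ((D.filter fun y => |x.1 - y.1| ≤ 1).sup fun y => y.2 + gap x.1 y.1)
    ((U.filter fun u => |x.1 - u.1| ≤ 1 ∧ u.2 < x.2).attach.sup
      fun u => dropLevel D U u.1 + gap x.1 u.1.1)
termination_by x.2
decreasing_by exact (mem_filter.mp u.2).2.2

theorem dropLevel_eq (D U : Finset (ℤ × ℕ)) (x : ℤ × ℕ) :
    dropLevel D U x = max ((D.filter fun y => |x.1 - y.1| ≤ 1).sup fun y => y.2 + gap x.1 y.1)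
      ((U.filter fun u => |x.1 - u.1| ≤ 1 ∧ u.2 < x.2).sup
        fun u => dropLevel D U u + gap x.1 u.1) := by
  rw [dropLevel, sup_attach _ fun u => dropLevel D U u + gap x.1 u.1]

theorem le_dropLevel_of_mem_base (hy : y ∈ D) (hxy : |x.1 - y.1| ≤ 1) :
    y.2 + gap x.1 y.1 ≤ dropLevel D U x := by
  rw [dropLevel_eq]
  exact le_max_of_le_left (le_sup (f := fun y => y.2 + gap x.1 y.1) (mem_filter.mpr ⟨hy, hxy⟩))

theorem dropLevel_add_gap_le (hu : u ∈ U) (hxu : |x.1 - u.1| ≤ 1) (hlt : u.2 < x.2) :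
    dropLevel D U u + gap x.1 u.1 ≤ dropLevel D U x := by
  conv_rhs => rw [dropLevel_eq]
  exact le_max_of_le_right
    (le_sup (f := fun u => dropLevel D U u + gap x.1 u.1) (mem_filter.mpr ⟨hu, hxu, hlt⟩))

theorem dropLevel_lt_dropLevel (hu : u ∈ U) (hxu : |x.1 - u.1| ≤ 1) (hlt : u.2 < x.2) :
    dropLevel D U u < dropLevel D U x :=
  (Nat.lt_add_of_pos_right (one_le_gap x.1 u.1)).trans_le (dropLevel_add_gap_le hu hxu hlt)

theorem dropLevel_le {t : ℕ} (hD : ∀ y ∈ D, |x.1 - y.1| ≤ 1 → y.2 + gap x.1 y.1 ≤ t)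
    (hU : ∀ u ∈ U, |x.1 - u.1| ≤ 1 → u.2 < x.2 → dropLevel D U u + gap x.1 u.1 ≤ t) :
    dropLevel D U x ≤ t := by
  rw [dropLevel_eq]
  refine max_le (Finset.sup_le fun y hy => ?_) (Finset.sup_le fun u hu => ?_)
  · exact hD y (mem_filter.mp hy).1 (mem_filter.mp hy).2
  · exact hU u (mem_filter.mp hu).1 (mem_filter.mp hu).2.1 (mem_filter.mp hu).2.2

theorem sup_eq_zero_or_exists {α : Type*} (s : Finset α) (f : α → ℕ) :
    s.sup f = 0 ∨ ∃ a ∈ s, s.sup f = f a := by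
  rcases s.eq_empty_or_nonempty with rfl | hs
  · exact Or.inl sup_empty
  · exact Or.inr (s.exists_mem_eq_sup hs f)

theorem exists_eq_dropLevel (h : 1 ≤ dropLevel D U x) :
    (∃ y ∈ D, |x.1 - y.1| ≤ 1 ∧ y.2 + gap x.1 y.1 = dropLevel D U x) ∨
      ∃ u ∈ U, |x.1 - u.1| ≤ 1 ∧ u.2 < x.2 ∧ dropLevel D U u + gap x.1 u.1 = dropLevel D U x := by
  rw [dropLevel_eq] at h ⊢
  set a := (D.filter fun y => |x.1 - y.1| ≤ 1).sup fun y => y.2 + gap x.1 y.1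
  set b := (U.filter fun u => |x.1 - u.1| ≤ 1 ∧ u.2 < x.2).sup
    fun u => dropLevel D U u + gap x.1 u.1
  rcases max_choice a b with hmax | hmax <;> rw [hmax] at h ⊢
  · obtain h0 | ⟨y, hy, hsup⟩ := sup_eq_zero_or_exists (D.filter fun y => |x.1 - y.1| ≤ 1)
      fun y => y.2 + gap x.1 y.1
    · omega
    · rw [mem_filter] at hy
      exact Or.inl ⟨y, hy.1, hy.2, hsup.symm⟩
  · obtain h0 | ⟨u, hu, hsup⟩ := sup_eq_zero_or_exists
      (U.filter fun u => |x.1 - u.1| ≤ 1 ∧ u.2 < x.2) fun u => dropLevel D U u + gap x.1 u.1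
    · omega
    · rw [mem_filter] at hu
      exact Or.inr ⟨u, hu.1, hu.2.1, hu.2.2, hsup.symm⟩

theorem dropLevel_lt_dropLevel_iff (hU : LevelSeparated U) (hx : x ∈ U) (hu : u ∈ U)
    (hxu : |x.1 - u.1| ≤ 1) : u.2 < x.2 ↔ dropLevel D U u < dropLevel D U x := by
  refine ⟨dropLevel_lt_dropLevel hu hxu, fun h => ?_⟩
  rcases lt_trichotomy u.2 x.2 with hlt | heq | hgt
  · exact hlt
  · rw [hU x hx u hu hxu heq.symm] at h
    exact absurd h (lt_irrefl _)
  · rw [abs_sub_comm] at hxu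
    exact absurd (dropLevel_lt_dropLevel hx hxu hgt) h.not_gt

def drop (D U : Finset (ℤ × ℕ)) : Finset (ℤ × ℕ) :=
  U.image fun u => (u.1, dropLevel D U u)

theorem mem_drop : x ∈ drop D U ↔ ∃ u ∈ U, (u.1, dropLevel D U u) = x := mem_image

theorem card_drop : #(drop D U) = #U := by
  refine card_image_of_injOn fun u hu v hv huv => ?_
  simp only [Prod.mk.injEq] at huv
  obtain ⟨hcol, hlevel⟩ := huv
  have huv : |u.1 - v.1| ≤ 1 := by simp [hcol]
  have hvu : |v.1 - u.1| ≤ 1 := by simp [hcol]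
  rcases lt_trichotomy u.2 v.2 with hlt | heq | hgt
  · exact absurd hlevel (dropLevel_lt_dropLevel hu hvu hlt).ne
  · exact Prod.ext hcol heq
  · exact absurd hlevel (dropLevel_lt_dropLevel hv huv hgt).ne'

theorem lt_of_mem_drop (hx : x ∈ drop D U) (hy : y ∈ D) (hxy : |x.1 - y.1| ≤ 1) : y.2 < x.2 := by
  obtain ⟨u, -, rfl⟩ := mem_drop.mp hx
  have := le_dropLevel_of_mem_base (U := U) (x := u) hy hxy
  have := one_le_gap u.1 y.1
  dsimp only
  omega

theorem disjoint_drop : Disjoint D (drop D U) :=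
  disjoint_left.mpr fun x hxD hx => lt_irrefl _ (lt_of_mem_drop hx hxD (by simp))

theorem exists_support_of_mem_drop (hx : x ∈ drop D U) (h1 : 1 ≤ x.2) :
    ∃ y ∈ D ∪ drop D U, |x.1 - y.1| ≤ 1 ∧ y.2 + gap x.1 y.1 = x.2 := by
  obtain ⟨u, -, rfl⟩ := mem_drop.mp hx
  rcases exists_eq_dropLevel h1 with ⟨y, hy, huy, heq⟩ | ⟨v, hv, huv, -, heq⟩
  · exact ⟨y, mem_union_left _ hy, huy, heq⟩
  · exact ⟨(v.1, dropLevel D U v), mem_union_right _ (mem_drop.mpr ⟨v, hv, rfl⟩), huv, heq⟩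

theorem dropLevel_image {g : ℤ × ℕ → ℤ × ℕ} (hcol : ∀ u ∈ U, (g u).1 = u.1)
    (hlt : ∀ u ∈ U, ∀ v ∈ U, |u.1 - v.1| ≤ 1 → (v.2 < u.2 ↔ (g v).2 < (g u).2)) (hu : u ∈ U) :
    dropLevel D (U.image g) (g u) = dropLevel D U u := by
  induction u using level_induction with
  | h u ih =>
  apply le_antisymm
  · apply dropLevel_le
    · intro y hy huy
      rw [hcol u hu] at huy ⊢
      exact le_dropLevel_of_mem_base hy huy
    · intro w hw huw hwu
      obtain ⟨v, hv, rfl⟩ := mem_image.mp hw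
      rw [hcol u hu, hcol v hv] at huw ⊢
      have hvu := (hlt u hu v hv huw).mpr hwu
      rw [ih v hvu hv]
      exact dropLevel_add_gap_le hv huw hvu
  · apply dropLevel_le
    · intro y hy huy
      rw [← hcol u hu] at huy ⊢
      exact le_dropLevel_of_mem_base hy huy
    · intro v hv huv hvu
      rw [← ih v hvu hv, ← hcol u hu, ← hcol v hv]
      have hguv : |(g u).1 - (g v).1| ≤ 1 := by rwa [hcol u hu, hcol v hv]
      exact dropLevel_add_gap_le (mem_image_of_mem g hv) hguv ((hlt u hu v hv huv).mp hvu)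

theorem drop_drop (hU : LevelSeparated U) : drop D (drop D' U) = drop D U := by
  simp only [drop, image_image]
  refine image_congr fun u hu => ?_
  simp only [Function.comp_apply, Prod.mk.injEq, true_and]
  exact dropLevel_image (fun _ _ => rfl)
    (fun u hu v hv huv => dropLevel_lt_dropLevel_iff hU hu hv huv) hu

theorem _root_.IsTriAnimal.dropLevel_sdiff {Q : Set ℤ} {s : ℤ} {A : Finset (ℤ × ℕ)}
    (hA : IsTriAnimal Q {s} A) (hUA : U ⊆ A)
    (hup : ∀ u ∈ U, ∀ x ∈ A, |x.1 - u.1| ≤ 1 → u.2 < x.2 → x ∈ U) (hu : u ∈ U) :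
    dropLevel (A \ U) U u = u.2 := by
  induction u using level_induction with
  | h u ih =>
  apply le_antisymm
  · apply dropLevel_le
    · intro y hy huy
      rw [mem_sdiff] at hy
      have hyu : y.2 < u.2 := by
        rcases lt_trichotomy y.2 u.2 with h | h | h
        · exact h
        · exact absurd (hA.levelSeparated u (hUA hu) y hy.1 huy h.symm ▸ hu) hy.2
        · exact absurd (hup u hu y hy.1 (by rwa [abs_sub_comm]) h) hy.2
      exact hA.level_add_gap_le (hUA hu) hy.1 hyu
    · intro v hv _ hvu
      rw [ih v hvu hv]
      exact hA.level_add_gap_le (hUA hu) (hUA hv) hvu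
  · rcases Nat.eq_zero_or_pos u.2 with h0 | hpos
    · omega
    obtain ⟨y, hy, huy, heq⟩ := hA.exists_support (hUA hu) hpos
    by_cases hyU : y ∈ U
    · have hyu : y.2 < u.2 := by have := one_le_gap u.1 y.1; omega
      have := dropLevel_add_gap_le (D := A \ U) hyU huy hyu
      rw [ih y hyu hyU] at this
      omega
    · have := le_dropLevel_of_mem_base (U := U) (mem_sdiff.mpr ⟨hy, hyU⟩) huy
      omega

theorem _root_.IsTriAnimal.drop_sdiff {Q : Set ℤ} {s : ℤ} {A : Finset (ℤ × ℕ)}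
    (hA : IsTriAnimal Q {s} A) (hUA : U ⊆ A)
    (hup : ∀ u ∈ U, ∀ x ∈ A, |x.1 - u.1| ≤ 1 → u.2 < x.2 → x ∈ U) :
    drop (A \ U) U = U := by
  conv_rhs => rw [← image_id (s := U)]
  exact image_congr fun u hu => Prod.ext rfl (hA.dropLevel_sdiff hUA hup hu)

theorem one_le_dropLevel {Q : Set ℤ} {D B : Finset (ℤ × ℕ)} {b : ℤ × ℕ}
    (hB : IsTriAnimal Q {0} B) (hD : (0, 0) ∈ D) (hb : b ∈ B) : 1 ≤ dropLevel D B b := by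
  rcases Nat.eq_zero_or_pos b.2 with h0 | hpos
  · obtain rfl := hB.eq_source hb h0
    have := le_dropLevel_of_mem_base (U := B) (x := (0, 0)) hD (by simp)
    have := one_le_gap 0 0
    dsimp only at *
    omega
  · obtain ⟨y, hy, hby, heq⟩ := hB.exists_support hb hpos
    have := one_le_gap b.1 y.1
    have := dropLevel_add_gap_le (D := D) hy hby (by omega)
    omega

end Drop

section Decomposition

variable {A : Finset (ℤ × ℕ)} {x u : ℤ × ℕ}

def StepUp (A : Finset (ℤ × ℕ)) (y x : ℤ × ℕ) : Prop :=
  x ∈ A ∧ |x.1 - y.1| ≤ 1 ∧ y.2 < x.2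

open scoped Classical in
noncomputable def upperPart (A : Finset (ℤ × ℕ)) : Finset (ℤ × ℕ) :=
  A.filter fun x => ∃ z ∈ A, z.1 = 0 ∧ 0 < z.2 ∧ Relation.ReflTransGen (StepUp A) z x

theorem mem_upperPart : x ∈ upperPart A ↔
    x ∈ A ∧ ∃ z ∈ A, z.1 = 0 ∧ 0 < z.2 ∧ Relation.ReflTransGen (StepUp A) z x := by
  classical exact mem_filter

theorem upperPart_subset : upperPart A ⊆ A := fun _ hx => (mem_upperPart.mp hx).1

theorem mem_upperPart_of_col_eq_zero (hx : x ∈ A) (h0 : x.1 = 0) (hpos : 0 < x.2) :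
    x ∈ upperPart A :=
  mem_upperPart.mpr ⟨hx, x, hx, h0, hpos, .refl⟩

theorem mem_upperPart_of_stepUp (hu : u ∈ upperPart A) (hx : x ∈ A) (hxu : |x.1 - u.1| ≤ 1)
    (hlt : u.2 < x.2) : x ∈ upperPart A := by
  obtain ⟨-, z, hz, h0, hpos, hzu⟩ := mem_upperPart.mp hu
  exact mem_upperPart.mpr ⟨hx, z, hz, h0, hpos, hzu.tail ⟨hx, hxu, hlt⟩⟩

theorem pos_of_mem_upperPart (hu : u ∈ upperPart A) : 0 < u.2 := by
  obtain ⟨-, z, -, -, hpos, hzu⟩ := mem_upperPart.mp hu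
  clear hu
  induction hzu with
  | refl => exact hpos
  | tail _ hstep ih => exact ih.trans hstep.2.2

theorem col_eq_zero_or_exists_of_mem_upperPart (hu : u ∈ upperPart A) :
    u.1 = 0 ∨ ∃ v ∈ upperPart A, |u.1 - v.1| ≤ 1 ∧ v.2 < u.2 := by
  obtain ⟨-, z, hz, h0, hpos, hzu⟩ := mem_upperPart.mp hu
  rcases hzu.cases_tail with rfl | ⟨v, hzv, -, huv, hvu⟩
  · exact Or.inl h0
  · have hvA : v ∈ A := by
      rcases hzv.cases_tail with rfl | ⟨w, -, hv, -⟩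
      exacts [hz, hv]
    exact Or.inr ⟨v, mem_upperPart.mpr ⟨hvA, z, hz, h0, hpos, hzv⟩, huv, hvu⟩

noncomputable def upperAnimal (A : Finset (ℤ × ℕ)) : Finset (ℤ × ℕ) := drop ∅ (upperPart A)

theorem upperAnimal_eq_empty_or_isTriAnimal {Q : Set ℤ} (hQ : ∀ x ∈ A, x.1 ∈ Q) :
    upperAnimal A = ∅ ∨ IsTriAnimal Q {0} (upperAnimal A) := by
  rcases (upperPart A).eq_empty_or_nonempty with hU | hU
  · simp [upperAnimal, drop, hU]
  right
  rw [isTriAnimal_iff]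
  refine ⟨fun x hx => ?_, fun q => ⟨fun hq => ?_, fun hq => ?_⟩, fun x hx h1 => ?_⟩
  · obtain ⟨u, hu, rfl⟩ := mem_drop.mp hx
    exact hQ u (upperPart_subset hu)
  · obtain ⟨u, hu, hequ⟩ := mem_drop.mp hq
    simp only [Prod.mk.injEq] at hequ
    rcases col_eq_zero_or_exists_of_mem_upperPart hu with h0 | ⟨v, hv, huv, hvu⟩
    · simp [← hequ.1, h0]
    · have := dropLevel_lt_dropLevel (D := ∅) hv huv hvu
      omega
  · obtain rfl := mem_singleton.mp hq
    obtain ⟨u, hu, hmin⟩ := exists_min_image (upperPart A) Prod.snd hU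
    have h0 : u.1 = 0 := (col_eq_zero_or_exists_of_mem_upperPart hu).resolve_right
      fun ⟨v, hv, _, hvu⟩ => (hmin v hv).not_gt hvu
    have hlevel : dropLevel ∅ (upperPart A) u = 0 := Nat.le_zero.mp <|
      dropLevel_le (by simp) fun v hv _ hvu => absurd hvu (hmin v hv).not_gt
    exact mem_drop.mpr ⟨u, hu, by rw [h0, hlevel]⟩
  · obtain ⟨y, hy, hxy⟩ := exists_support_of_mem_drop hx h1
    exact ⟨y, by simpa [upperAnimal] using hy, hxy⟩

noncomputable def lowerPart (A : Finset (ℤ × ℕ)) : Finset (ℤ × ℕ) :=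
  (A \ upperPart A).erase (0, 0)

theorem mem_lowerPart : x ∈ lowerPart A ↔ x ≠ (0, 0) ∧ x ∈ A ∧ x ∉ upperPart A := by
  rw [lowerPart, mem_erase, mem_sdiff]

variable {m : ℤ}

theorem pos_of_mem_lowerPart (hA : IsTriAnimal (Set.Ico 0 m) {0} A) (hx : x ∈ lowerPart A) :
    0 < x.1 ∧ 0 < x.2 := by
  obtain ⟨hne, hxA, hxU⟩ := mem_lowerPart.mp hx
  have hpos : 0 < x.2 := Nat.pos_of_ne_zero fun h0 => hne (hA.eq_source hxA h0)
  refine ⟨lt_of_le_of_ne (hA.1 x hxA).1 fun h0 => ?_, hpos⟩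
  exact hxU (mem_upperPart_of_col_eq_zero hxA h0.symm hpos)

theorem exists_support_mem_lowerPart (hA : IsTriAnimal (Set.Ico 0 m) {0} A)
    (hx : x ∈ lowerPart A) (h2 : 2 ≤ x.2) :
    ∃ y ∈ lowerPart A, |x.1 - y.1| ≤ 1 ∧ y.2 + gap x.1 y.1 = x.2 := by
  obtain ⟨-, hxA, hxU⟩ := mem_lowerPart.mp hx
  obtain ⟨y, hyA, hxy, heq⟩ := hA.exists_support hxA (by omega)
  refine ⟨y, mem_lowerPart.mpr ⟨?_, hyA, fun hyU => hxU ?_⟩, hxy, heq⟩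
  · rintro rfl
    have : gap x.1 0 = 1 := if_neg (pos_of_mem_lowerPart hA hx).1.ne'
    dsimp only at heq
    omega
  · exact mem_upperPart_of_stepUp hyU hxA hxy (by have := one_le_gap x.1 y.1; omega)

theorem eq_one_one_of_mem_lowerPart (hA : IsTriAnimal (Set.Ico 0 m) {0} A)
    (hx : x ∈ lowerPart A) (h1 : x.2 = 1) : x = (1, 1) := by
  obtain ⟨-, hxA, -⟩ := mem_lowerPart.mp hx
  obtain ⟨y, hyA, hxy, heq⟩ := hA.exists_support hxA (by omega)
  have := one_le_gap x.1 y.1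
  obtain rfl := hA.eq_source hyA (by omega)
  have := (pos_of_mem_lowerPart hA hx).1
  rw [abs_le] at hxy
  exact Prod.ext (by dsimp only at hxy; omega) h1

theorem one_one_mem_lowerPart (hA : IsTriAnimal (Set.Ico 0 m) {0} A)
    (hne : (lowerPart A).Nonempty) : (1, 1) ∈ lowerPart A := by
  obtain ⟨x, hx, hmin⟩ := exists_min_image (lowerPart A) Prod.snd hne
  have h1 : x.2 = 1 := by
    by_contra h1
    have := (pos_of_mem_lowerPart hA hx).2
    obtain ⟨y, hy, -, heq⟩ := exists_support_mem_lowerPart hA hx (by omega)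
    have := hmin y hy
    have := one_le_gap x.1 y.1
    omega
  rwa [← eq_one_one_of_mem_lowerPart hA hx h1]

noncomputable def lowerAnimal (A : Finset (ℤ × ℕ)) : Finset (ℤ × ℕ) :=
  (lowerPart A).image fun x => (x.1 - 1, x.2 - 1)

theorem lowerAnimal_eq_empty_or_isTriAnimal (hA : IsTriAnimal (Set.Ico 0 m) {0} A) :
    lowerAnimal A = ∅ ∨ IsTriAnimal (Set.Ico 0 (m - 1)) {0} (lowerAnimal A) := by
  rcases (lowerPart A).eq_empty_or_nonempty with hL | hL
  · simp [lowerAnimal, hL]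
  right
  rw [isTriAnimal_iff]
  refine ⟨fun x hx => ?_, fun q => ?_, fun x hx h1 => ?_⟩
  · obtain ⟨y, hy, rfl⟩ := mem_image.mp hx
    have := hA.1 y (mem_lowerPart.mp hy).2.1
    have := (pos_of_mem_lowerPart hA hy).1
    simp only [Set.mem_Ico] at *
    omega
  · simp only [lowerAnimal, mem_image, Prod.mk.injEq, mem_singleton]
    constructor
    · rintro ⟨x, hx, rfl, hx1⟩
      have := (pos_of_mem_lowerPart hA hx).2
      rw [eq_one_one_of_mem_lowerPart hA hx (by omega)]
      rfl
    · rintro rfl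
      exact ⟨(1, 1), one_one_mem_lowerPart hA hL, rfl, rfl⟩
  · obtain ⟨x, hxL, rfl⟩ := mem_image.mp hx
    have h2 : 2 ≤ x.2 := by dsimp only at h1; omega
    obtain ⟨y, hy, hxy, heq⟩ := exists_support_mem_lowerPart hA hxL h2
    have := (pos_of_mem_lowerPart hA hy).2
    refine ⟨(y.1 - 1, y.2 - 1), mem_image_of_mem _ hy, by simpa using hxy, ?_⟩
    have : gap x.1 y.1 = gap (x.1 - 1) (y.1 - 1) := by
      simpa using gap_add_add (x.1 - 1) (y.1 - 1) 1
    dsimp only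
    omega

end Decomposition

section Glue

variable {m : ℤ} {A B C : Finset (ℤ × ℕ)} {x : ℤ × ℕ}

def base (C : Finset (ℤ × ℕ)) : Finset (ℤ × ℕ) :=
  insert (0, 0) (C.image fun c => (c.1 + 1, c.2 + 1))

theorem mem_base : x ∈ base C ↔ x = (0, 0) ∨ ∃ c ∈ C, (c.1 + 1, c.2 + 1) = x := by
  rw [base, mem_insert, mem_image]

noncomputable def glue (B C : Finset (ℤ × ℕ)) : Finset (ℤ × ℕ) :=
  base C ∪ drop (base C) B

theorem base_lowerAnimal (hA : IsTriAnimal (Set.Ico 0 m) {0} A) :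
    base (lowerAnimal A) = A \ upperPart A := by
  have hraise : (lowerAnimal A).image (fun c => (c.1 + 1, c.2 + 1)) = lowerPart A := by
    rw [lowerAnimal, image_image]
    conv_rhs => rw [← image_id (s := lowerPart A)]
    refine image_congr fun x hx => ?_
    have := (pos_of_mem_lowerPart hA hx).2
    simp only [Function.comp_apply, id, Prod.ext_iff]
    omega
  rw [base, hraise, lowerPart, insert_erase]
  exact mem_sdiff.mpr ⟨hA.source_mem, fun h => lt_irrefl 0 (pos_of_mem_upperPart h)⟩

theorem glue_upperAnimal_lowerAnimal (hA : IsTriAnimal (Set.Ico 0 m) {0} A) :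
    glue (upperAnimal A) (lowerAnimal A) = A := by
  rw [glue, base_lowerAnimal hA, upperAnimal, drop_drop (hA.levelSeparated.mono upperPart_subset),
    hA.drop_sdiff upperPart_subset fun _ hu _ hx => mem_upperPart_of_stepUp hu hx,
    sdiff_union_of_subset upperPart_subset]

theorem card_glue (B C : Finset (ℤ × ℕ)) : #(glue B C) = #B + #C + 1 := by
  rw [glue, card_union_of_disjoint disjoint_drop, card_drop, base, card_insert_of_notMem,
    card_image_of_injective]
  · omega
  · intro c c' h
    simp only [Prod.mk.injEq, add_left_inj] at h
    exact Prod.ext h.1 h.2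
  · simp

theorem isTriAnimal_base (hm : 0 < m) (hC : C = ∅ ∨ IsTriAnimal (Set.Ico 0 (m - 1)) {0} C) :
    IsTriAnimal (Set.Ico 0 m) {0} (base C) := by
  obtain rfl | hC := hC
  · simp [isTriAnimal_iff, base, hm]
  rw [isTriAnimal_iff]
  refine ⟨fun x hx => ?_, fun q => ?_, fun x hx h1 => ?_⟩
  · rcases mem_base.mp hx with rfl | ⟨c, hc, rfl⟩
    · simpa using hm
    · have := hC.1 c hc
      simp only [Set.mem_Ico] at this ⊢
      omega
  · simp [mem_base]
  · rcases mem_base.mp hx with rfl | ⟨c, hc, rfl⟩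
    · simp at h1
    rcases Nat.eq_zero_or_pos c.2 with h0 | hpos
    · obtain rfl := hC.eq_source hc h0
      exact ⟨(0, 0), mem_insert_self _ _, by simp, by simp [gap]⟩
    · obtain ⟨y, hy, hcy, heq⟩ := hC.exists_support hc hpos
      refine ⟨(y.1 + 1, y.2 + 1), mem_insert_of_mem (mem_image_of_mem _ hy), by simpa using hcy, ?_⟩
      dsimp only
      rw [gap_add_add]
      omega

theorem isTriAnimal_glue (hm : 0 < m) (hB : B = ∅ ∨ IsTriAnimal (Set.Ico 0 m) {0} B)
    (hC : C = ∅ ∨ IsTriAnimal (Set.Ico 0 (m - 1)) {0} C) :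
    IsTriAnimal (Set.Ico 0 m) {0} (glue B C) := by
  have hbase := isTriAnimal_base hm hC
  obtain rfl | hB := hB
  · simpa [glue, drop] using hbase
  rw [isTriAnimal_iff] at hbase ⊢
  refine ⟨fun x hx => ?_, fun q => ?_, fun x hx h1 => ?_⟩
  · rcases mem_union.mp hx with hx | hx
    · exact hbase.1 x hx
    · obtain ⟨b, hb, rfl⟩ := mem_drop.mp hx
      exact hB.1 b hb
  · rw [glue, mem_union, hbase.2.1, or_iff_left]
    intro hq
    obtain ⟨b, hb, hbq⟩ := mem_drop.mp hq
    have := one_le_dropLevel (D := base C) hB (mem_insert_self _ _) hb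
    simp only [Prod.mk.injEq] at hbq
    omega
  · rcases mem_union.mp hx with hx | hx
    · obtain ⟨y, hy, h⟩ := hbase.2.2 x hx h1
      exact ⟨y, mem_union_left _ hy, h⟩
    · exact exists_support_of_mem_drop hx h1

theorem upperPart_glue {Q : Set ℤ} (hB : B = ∅ ∨ IsTriAnimal Q {0} B) (hC : ∀ c ∈ C, 0 ≤ c.1) :
    upperPart (glue B C) = drop (base C) B := by
  apply Subset.antisymm
  · intro x hx
    obtain ⟨-, z, hz, h0, hpos, hzx⟩ := mem_upperPart.mp hx
    clear hx
    induction hzx with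
    | refl =>
      refine (mem_union.mp hz).resolve_left fun hzb => ?_
      rcases mem_base.mp hzb with rfl | ⟨c, hc, rfl⟩
      · exact lt_irrefl 0 hpos
      · have := hC c hc
        dsimp only at h0
        omega
    | tail _ hstep ih =>
      obtain ⟨hxG, hxy, hlt⟩ := hstep
      refine (mem_union.mp hxG).resolve_left fun hxb => ?_
      exact (lt_of_mem_drop ih hxb (by rwa [abs_sub_comm])).not_gt hlt
  · obtain rfl | hB := hB
    · simp [drop]
    intro x hx
    obtain ⟨b, hb, rfl⟩ := mem_drop.mp hx
    induction b using level_induction with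
    | h b ih =>
    rcases Nat.eq_zero_or_pos b.2 with h0 | hpos
    · exact mem_upperPart_of_col_eq_zero (mem_union_right _ hx)
        (by rw [hB.eq_source hb h0]) (one_le_dropLevel hB (mem_insert_self _ _) hb)
    · obtain ⟨y, hy, hby, heq⟩ := hB.exists_support hb hpos
      have hyb : y.2 < b.2 := by have := one_le_gap b.1 y.1; omega
      exact mem_upperPart_of_stepUp (ih y hyb hy (mem_drop.mpr ⟨y, hy, rfl⟩))
        (mem_union_right _ hx) hby (dropLevel_lt_dropLevel hy hby hyb)

theorem upperAnimal_glue {Q : Set ℤ} (hB : B = ∅ ∨ IsTriAnimal Q {0} B) (hC : ∀ c ∈ C, 0 ≤ c.1) :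
    upperAnimal (glue B C) = B := by
  rw [upperAnimal, upperPart_glue hB hC]
  obtain rfl | hB := hB
  · simp [drop]
  rw [drop_drop hB.levelSeparated]
  simpa using hB.drop_sdiff subset_rfl fun _ _ _ hx _ _ => hx

theorem lowerAnimal_glue {Q : Set ℤ} (hB : B = ∅ ∨ IsTriAnimal Q {0} B) (hC : ∀ c ∈ C, 0 ≤ c.1) :
    lowerAnimal (glue B C) = C := by
  have hlower : lowerPart (glue B C) = C.image fun c => (c.1 + 1, c.2 + 1) := by
    rw [lowerPart, upperPart_glue hB hC, glue, union_sdiff_cancel_right disjoint_drop, base,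
      erase_insert (by simp)]
  rw [lowerAnimal, hlower, image_image]
  conv_rhs => rw [← image_id (s := C)]
  exact image_congr fun c _ => by simp

end Glue

section Counting

theorem level_lt_two_mul_card {Q : Set ℤ} {S : Finset ℤ} {A : Finset (ℤ × ℕ)}
    (hA : IsTriAnimal Q S A) {x : ℤ × ℕ} (hx : x ∈ A) : x.2 < 2 * #A := by
  suffices h : ∀ x ∈ A, x.2 < 2 * #(A.filter fun z => z.2 ≤ x.2) by
    have := card_filter_le A fun z => z.2 ≤ x.2
    have := h x hx
    omega
  intro x
  induction x using level_induction with
  | h x ih =>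
  intro hx
  rcases Nat.eq_zero_or_pos x.2 with h0 | hpos
  · have : 0 < #(A.filter fun z => z.2 ≤ x.2) := card_pos.mpr ⟨x, mem_filter.mpr ⟨hx, le_rfl⟩⟩
    omega
  · obtain ⟨y, hy, -, heq⟩ := hA.exists_support hx hpos
    have := one_le_gap x.1 y.1
    have := gap_le_two x.1 y.1
    have hyx : y.2 < x.2 := by omega
    have hsub : A.filter (fun z => z.2 ≤ y.2) ⊂ A.filter fun z => z.2 ≤ x.2 := by
      refine (ssubset_iff_of_subset fun z hz => ?_).mpr ⟨x, mem_filter.mpr ⟨hx, le_rfl⟩, ?_⟩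
      · rw [mem_filter] at hz ⊢
        exact ⟨hz.1, hz.2.trans hyx.le⟩
      · rw [mem_filter]
        omega
    have := card_lt_card hsub
    have := ih y hyx hy
    omega

theorem finite_isTriAnimal_card_eq (a b : ℤ) (S : Finset ℤ) (n : ℕ) :
    {A : Finset (ℤ × ℕ) | IsTriAnimal (Set.Ico a b) S A ∧ #A = n}.Finite := by
  refine ((Finset.Ico a b ×ˢ range (2 * n)).powerset.finite_toSet).subset ?_
  rintro A ⟨hA, rfl⟩
  rw [mem_coe, mem_powerset]
  intro x hx
  rw [mem_product, Finset.mem_Ico, mem_range, ← Set.mem_Ico]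
  exact ⟨hA.1 x hx, level_lt_two_mul_card hA hx⟩

noncomputable def animalsOfArea (m : ℤ) (n : ℕ) : Finset (Finset (ℤ × ℕ)) :=
  (finite_isTriAnimal_card_eq 0 m {0} n).toFinset

variable {m : ℤ} {n : ℕ} {A : Finset (ℤ × ℕ)}

theorem mem_animalsOfArea : A ∈ animalsOfArea m n ↔ IsTriAnimal (Set.Ico 0 m) {0} A ∧ #A = n :=
  Set.Finite.mem_toFinset _

theorem triCount_eq_card_animalsOfArea (m : ℤ) (n : ℕ) :
    triCount (Set.Ico 0 m) {0} n = #(animalsOfArea m n) :=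
  Set.ncard_eq_toFinset_card _ _

theorem animalsOfArea_zero (m : ℤ) : animalsOfArea m 0 = ∅ :=
  eq_empty_of_forall_notMem fun A hA => by
    obtain ⟨hA, h0⟩ := mem_animalsOfArea.mp hA
    exact notMem_empty _ (card_eq_zero.mp h0 ▸ hA.source_mem)

noncomputable def animalsOrEmptyOfArea (m : ℤ) (n : ℕ) : Finset (Finset (ℤ × ℕ)) :=
  if n = 0 then {∅} else animalsOfArea m n

theorem mem_animalsOrEmptyOfArea :
    A ∈ animalsOrEmptyOfArea m n ↔ (A = ∅ ∨ IsTriAnimal (Set.Ico 0 m) {0} A) ∧ #A = n := by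
  unfold animalsOrEmptyOfArea
  split_ifs with hn
  · subst hn
    rw [mem_singleton, card_eq_zero]
    exact ⟨fun h => ⟨Or.inl h, h⟩, And.right⟩
  · rw [mem_animalsOfArea]
    refine ⟨fun h => ⟨Or.inr h.1, h.2⟩, ?_⟩
    rintro ⟨rfl | hA, h⟩
    · exact absurd h.symm hn
    · exact ⟨hA, h⟩

theorem coeff_one_add_triGF (m : ℤ) (n : ℕ) :
    PowerSeries.coeff n (1 + triGF (Set.Ico 0 m) {0}) = (#(animalsOrEmptyOfArea m n) : ℤ) := by
  rw [map_add, triGF, PowerSeries.coeff_mk, PowerSeries.coeff_one, triCount_eq_card_animalsOfArea,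
    animalsOrEmptyOfArea]
  split_ifs with hn
  · simp [hn, animalsOfArea_zero]
  · simp

noncomputable def animalPairsOfArea (m : ℤ) (n : ℕ) :
    Finset (Finset (ℤ × ℕ) × Finset (ℤ × ℕ)) :=
  (antidiagonal n).biUnion fun p => animalsOrEmptyOfArea m p.1 ×ˢ animalsOrEmptyOfArea (m - 1) p.2

theorem mem_animalPairsOfArea {B C : Finset (ℤ × ℕ)} :
    (B, C) ∈ animalPairsOfArea m n ↔ (B = ∅ ∨ IsTriAnimal (Set.Ico 0 m) {0} B) ∧
      (C = ∅ ∨ IsTriAnimal (Set.Ico 0 (m - 1)) {0} C) ∧ #B + #C = n := by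
  simp only [animalPairsOfArea, mem_biUnion, mem_product, HasAntidiagonal.mem_antidiagonal,
    mem_animalsOrEmptyOfArea]
  exact ⟨fun ⟨p, hp, ⟨hB, hB'⟩, ⟨hC, hC'⟩⟩ => ⟨hB, hC, hB' ▸ hC' ▸ hp⟩,
    fun ⟨hB, hC, h⟩ => ⟨(#B, #C), h, ⟨hB, rfl⟩, ⟨hC, rfl⟩⟩⟩

theorem card_animalPairsOfArea (m : ℤ) (n : ℕ) : #(animalPairsOfArea m n) =
    ∑ p ∈ antidiagonal n, #(animalsOrEmptyOfArea m p.1) * #(animalsOrEmptyOfArea (m - 1) p.2) := by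
  rw [animalPairsOfArea, card_biUnion]
  · simp only [card_product]
  · intro p _ q _ hpq
    refine disjoint_left.mpr fun ⟨B, C⟩ hp hq => hpq ?_
    simp only [mem_product, mem_animalsOrEmptyOfArea] at hp hq
    exact Prod.ext (hp.1.2.symm.trans hq.1.2) (hp.2.2.symm.trans hq.2.2)

theorem card_animalsOfArea_succ (hm : 0 < m) (n : ℕ) :
    #(animalsOfArea m (n + 1)) = #(animalPairsOfArea m n) := by
  have col_nonneg : ∀ {C : Finset (ℤ × ℕ)}, (C = ∅ ∨ IsTriAnimal (Set.Ico 0 (m - 1)) {0} C) →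
      ∀ c ∈ C, 0 ≤ c.1 := by
    rintro C (rfl | hC) c hc
    exacts [absurd hc (notMem_empty c), (hC.1 c hc).1]
  refine card_nbij' (fun A => (upperAnimal A, lowerAnimal A)) (fun p => glue p.1 p.2)
    (fun A hA => ?_) (fun p hp => ?_) (fun A hA => ?_) (fun p hp => ?_)
  · obtain ⟨hA, hcard⟩ := mem_animalsOfArea.mp hA
    have := card_glue (upperAnimal A) (lowerAnimal A)
    rw [glue_upperAnimal_lowerAnimal hA] at this
    exact mem_animalPairsOfArea.mpr ⟨upperAnimal_eq_empty_or_isTriAnimal hA.1,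
      lowerAnimal_eq_empty_or_isTriAnimal hA, by omega⟩
  · obtain ⟨hB, hC, hcard⟩ := mem_animalPairsOfArea.mp hp
    exact mem_animalsOfArea.mpr ⟨isTriAnimal_glue hm hB hC, by rw [card_glue, hcard]⟩
  · exact glue_upperAnimal_lowerAnimal (mem_animalsOfArea.mp hA).1
  · obtain ⟨hB, hC, -⟩ := mem_animalPairsOfArea.mp hp
    exact Prod.ext (upperAnimal_glue hB (col_nonneg hC)) (lowerAnimal_glue hB (col_nonneg hC))

theorem triGF_Ico_eq_X_mul (hm : 0 < m) :
    triGF (Set.Ico 0 m) {0} = PowerSeries.X *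
      ((1 + triGF (Set.Ico 0 m) {0}) * (1 + triGF (Set.Ico 0 (m - 1)) {0})) := by
  ext (_ | n)
  · simp [triGF, triCount_eq_card_animalsOfArea, animalsOfArea_zero]
  · rw [PowerSeries.coeff_succ_X_mul, PowerSeries.coeff_mul]
    simp only [coeff_one_add_triGF]
    rw [triGF, PowerSeries.coeff_mk, triCount_eq_card_animalsOfArea, card_animalsOfArea_succ hm,
      card_animalPairsOfArea]
    push_cast
    rfl

theorem triGF_eq_zero_of_notMem {Q : Set ℤ} {s : ℤ} (h : s ∉ Q) : triGF Q {s} = 0 := by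
  ext n
  have : {A : Finset (ℤ × ℕ) | IsTriAnimal Q {s} A ∧ #A = n} = ∅ :=
    Set.eq_empty_of_forall_notMem fun A hA => h (hA.1.1 _ hA.1.source_mem)
  rw [triGF, PowerSeries.coeff_mk, triCount, this, Set.ncard_empty, Nat.cast_zero, map_zero]

end Counting

theorem one_add_triGF_mul_Tnat (M : ℕ) :
    (1 + triGF (Set.Ico 0 (M : ℤ)) {0}) * (Tnat (M + 1) : PowerSeries ℤ) = Tnat M := by
  induction M with
  | zero => simp [Tnat, triGF_eq_zero_of_notMem]
  | succ M ih =>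
    have hrec := triGF_Ico_eq_X_mul (m := ((M + 1 : ℕ) : ℤ)) (by positivity)
    rw [show ((M + 1 : ℕ) : ℤ) - 1 = M by push_cast; ring] at hrec
    rw [Tnat, Polynomial.coe_sub, Polynomial.coe_mul, Polynomial.coe_X]
    linear_combination (Tnat (M + 1) : PowerSeries ℤ) * hrec +
      (1 + triGF (Set.Ico 0 ((M + 1 : ℕ) : ℤ)) {0}) * PowerSeries.X * ih

end TriAnimal

theorem Tpoly_eq_Tnat {k : ℤ} {n : ℕ} (h : k + 1 = n) : Tpoly k = Tnat n := by
  rw [Tpoly, h, Int.toNat_natCast]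

theorem stmt7_general (m : ℕ) :
    (1 + triGF (Set.Ico 0 (m : ℤ)) {0}) * ((Tpoly m : Polynomial ℤ) : PowerSeries ℤ)
      = ((Tpoly ((m : ℤ) - 1) : Polynomial ℤ) : PowerSeries ℤ) := by
  rw [Tpoly_eq_Tnat (n := m + 1) (by push_cast; rfl), Tpoly_eq_Tnat (n := m) (by ring)]
  exact TriAnimal.one_add_triGF_mul_Tnat m

theorem stmt7 (m : ℕ) (hm : 1 ≤ m) :
    (1 + triGF (Set.Ico 0 (m : ℤ)) {0}) * ((Tpoly m : Polynomial ℤ) : PowerSeries ℤ)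
      = ((Tpoly ((m : ℤ) - 1) : Polynomial ℤ) : PowerSeries ℤ) :=
  stmt7_general m
end

section
/- For every integer m ≥ 1, the identity (1 + 𝒜_{2m}(t)) · T̂_{2m}(t) = T_{2m−1}(t) holds in the ring of formal power series ℤ[[t]], where the polynomials are regarded as power series. -/
/-- A triangular-lattice directed animal over the cyclic position set `ZMod N`
with source `S`: sites on line `0` are exactly the source, and every higher site
is supported at the left, at the right, or at the center (two lines below),
neighbours `q ± 1` being computed modulo `N`. -/
def IsTriAnimalZ (N : ℕ) (S : Finset (ZMod N)) (A : Finset (ZMod N × ℕ)) : Prop :=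
  (∀ q : ZMod N, (q, 0) ∈ A ↔ q ∈ S) ∧
  ∀ x ∈ A, 1 ≤ x.2 →
    (x.1 - 1, x.2 - 1) ∈ A ∨ (x.1 + 1, x.2 - 1) ∈ A ∨ (2 ≤ x.2 ∧ (x.1, x.2 - 2) ∈ A)

/-- A square-lattice directed animal over the cyclic position set `ZMod N`. -/
def IsSqAnimalZ (N : ℕ) (S : Finset (ZMod N)) (A : Finset (ZMod N × ℕ)) : Prop :=
  (∀ q : ZMod N, (q, 0) ∈ A ↔ q ∈ S) ∧
  ∀ x ∈ A, 1 ≤ x.2 →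
    (x.1 - 1, x.2 - 1) ∈ A ∨ (x.1 + 1, x.2 - 1) ∈ A

/-- Number of triangular-lattice directed animals over `ZMod N` with source `S` and area `n`. -/
noncomputable def triCountZ (N : ℕ) (S : Finset (ZMod N)) (n : ℕ) : ℕ :=
  {A : Finset (ZMod N × ℕ) | IsTriAnimalZ N S A ∧ A.card = n}.ncard

/-- Number of square-lattice directed animals over `ZMod N` with source `S` and area `n`. -/
noncomputable def sqCountZ (N : ℕ) (S : Finset (ZMod N)) (n : ℕ) : ℕ :=
  {A : Finset (ZMod N × ℕ) | IsSqAnimalZ N S A ∧ A.card = n}.ncard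

/-- Generating function of triangular-lattice directed animals over `ZMod N` with source `S`. -/
noncomputable def triGFZ (N : ℕ) (S : Finset (ZMod N)) : PowerSeries ℤ :=
  PowerSeries.mk fun n => (triCountZ N S n : ℤ)

/-!
Read the cells of an animal on the cylinder of even width `N` as pieces of a heap over the cycle
`C_N`: a cell in column `q` rests on the cells of columns `q - 1`, `q`, `q + 1` below it. Since
`N` is even, the level of every cell has the parity of its column, so cells of adjacent columns
never share a level and cells of one column are at least two levels apart; hence the animals with
source `{0}` are exactly the nonempty heaps whose only minimal piece lies in column `0`.
Viennot's inversion lemma then gives `(1 + 𝒜_N) · I(C_N) = I(C_N - {0})`, where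
`I(G) = ∑_T (-t)^|T|` over the independent sets `T` of `G`: on pairs (heap, independent set),
moving the leftmost movable piece between the heap and the independent set is a sign-reversing
involution whose fixed points are the pairs `(∅, T)` with `0 ∉ T`. Finally a path with `k`
vertices has `I = T_k` (delete an end vertex), and deleting the vertex `0` of the cycle gives
`I(C_N) = T_{N-1} - t T_{N-3} = T̂_N`.
-/

open Finset Polynomial
open scoped Classical

/-! ### Independence polynomials of paths and cycles -/

namespace SimpleGraph

section SignedIndepPoly

variable {α : Type*} [DecidableEq α] (G : SimpleGraph α)

noncomputable def signedIndepPoly (s : Finset α) : ℤ[X] :=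
  ∑ T ∈ s.powerset with G.IsIndepSet (T : Finset α), (-X) ^ #T

theorem coeff_signedIndepPoly (s : Finset α) (n : ℕ) :
    (G.signedIndepPoly s).coeff n =
      ∑ T ∈ s.powerset with G.IsIndepSet (T : Finset α) ∧ #T = n, (-1) ^ #T := by
  rw [signedIndepPoly, finsetSum_coeff, ← filter_filter, sum_filter (p := fun T => #T = n)]
  refine sum_congr rfl fun T _ => ?_
  rw [neg_pow, ← C_1, ← C_neg, ← C_pow, coeff_C_mul_X_pow]
  exact if_congr eq_comm rfl rfl

theorem signedIndepPoly_empty : G.signedIndepPoly ∅ = 1 := by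
  simp [signedIndepPoly, filter_singleton]

theorem signedIndepPoly_eq_sub {s : Finset α} {v : α} (hv : v ∈ s) :
    G.signedIndepPoly s =
      G.signedIndepPoly (s.erase v) - X * G.signedIndepPoly {w ∈ s.erase v | ¬ G.Adj v w} := by
  have hpow : {T ∈ (s.erase v).powerset | ∀ w ∈ T, ¬ G.Adj v w} =
      {w ∈ s.erase v | ¬ G.Adj v w}.powerset := by
    ext T
    simp only [mem_filter, mem_powerset, subset_iff]
    grind
  have hins (T : Finset α) (hT : T ∈ (s.erase v).powerset) :
      (if G.IsIndepSet (insert v T : Finset α) then (-X : ℤ[X]) ^ #(insert v T) else 0) =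
        -X * if (∀ w ∈ T, ¬ G.Adj v w) ∧ G.IsIndepSet (T : Finset α) then (-X) ^ #T
          else 0 := by
    have hvT : v ∉ T := notMem_of_mem_powerset_of_notMem hT (notMem_erase v s)
    have hind : G.IsIndepSet (insert v T : Finset α) ↔
        (∀ w ∈ T, ¬ G.Adj v w) ∧ G.IsIndepSet (T : Finset α) := by
      rw [coe_insert, isIndepSet_iff, Set.pairwise_insert_of_notMem (mem_coe.not.2 hvT), and_comm]
      simp [G.adj_comm _ v, isIndepSet_iff]
    rw [if_congr hind rfl rfl, card_insert_of_notMem hvT, pow_succ', mul_ite, mul_zero]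
  rw [← insert_erase hv, signedIndepPoly, sum_filter, sum_powerset_insert (notMem_erase v s),
    sum_congr rfl hins, ← mul_sum, erase_insert (notMem_erase v s), sub_eq_add_neg, ← neg_mul]
  simp only [signedIndepPoly, ← hpow, filter_filter, sum_filter]

end SignedIndepPoly

def cycleZMod (N : ℕ) : SimpleGraph (ZMod N) := fromRel fun a b => b = a + 1

theorem cycleZMod_adj {N : ℕ} [Fact (1 < N)] {a b : ZMod N} :
    (cycleZMod N).Adj a b ↔ b = a + 1 ∨ b = a - 1 := by
  rw [cycleZMod, fromRel_adj, eq_sub_iff_add_eq, eq_comm (b := a)]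
  refine ⟨And.right, fun h => ⟨?_, h⟩⟩
  rintro rfl
  simp at h

end SimpleGraph

namespace ZMod

variable {N : ℕ}

theorem natCast_inj_of_lt {i j : ℕ} (hi : i < N) (hj : j < N) : (i : ZMod N) = j ↔ i = j := by
  rw [natCast_eq_natCast_iff', Nat.mod_eq_of_lt hi, Nat.mod_eq_of_lt hj]

def arc (a : ZMod N) (k : ℕ) : Finset (ZMod N) := (range k).image fun i : ℕ => a + i

theorem arc_zero (a : ZMod N) : arc a 0 = ∅ := rfl

theorem arc_succ (a : ZMod N) (k : ℕ) : arc a (k + 1) = insert (a + k) (arc a k) := by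
  rw [arc, range_add_one, image_insert, arc]

theorem arc_succ' (a : ZMod N) (k : ℕ) : arc a (k + 1) = insert a (arc (a + 1) k) := by
  rw [arc, range_add_one', image_insert, map_eq_image, image_image, arc, Nat.cast_zero, add_zero]
  congr 2
  funext i
  change a + ((i + 1 : ℕ) : ZMod N) = a + 1 + i
  push_cast
  ring

theorem add_natCast_notMem_arc (a : ZMod N) {k : ℕ} (hk : k < N) : a + k ∉ arc a k := by
  simp only [arc, mem_image, mem_range, add_right_inj, not_exists, not_and]
  intro i hi h
  exact hi.ne ((natCast_inj_of_lt (hi.trans hk) hk).1 h)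

theorem card_arc (a : ZMod N) {k : ℕ} (hk : k ≤ N) : #(arc a k) = k := by
  rw [arc, card_image_of_injOn, card_range]
  intro i hi j hj h
  simp only [coe_range, Set.mem_Iio, add_right_inj] at hi hj h
  exact (natCast_inj_of_lt (by omega) (by omega)).1 h

theorem arc_one_eq_erase_zero [NeZero N] : arc (1 : ZMod N) (N - 1) = univ.erase 0 := by
  have hN : 0 < N := NeZero.pos N
  have h0 : (0 : ZMod N) ∉ arc 1 (N - 1) := by
    simp only [arc, mem_image, mem_range, not_exists, not_and]
    intro i hi h
    rw [add_comm, ← Nat.cast_add_one, ← Nat.cast_zero, natCast_inj_of_lt (by omega) hN] at h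
    omega
  have hsucc := arc_succ' (0 : ZMod N) (N - 1)
  rw [Nat.sub_add_cancel hN, zero_add,
    eq_univ_of_card (arc (0 : ZMod N) N) (by rw [card_arc _ le_rfl, ZMod.card])] at hsucc
  rw [hsucc, erase_insert h0]

end ZMod

namespace SimpleGraph

open ZMod

variable {N : ℕ} [Fact (1 < N)]

theorem filter_not_adj_arc (a : ZMod N) {k : ℕ} (hk : k + 2 < N) :
    {x ∈ arc a (k + 1) | ¬ (cycleZMod N).Adj (a + (k + 1 : ℕ)) x} = arc a k := by
  rw [arc, filter_image, arc]
  congr 1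
  ext i
  simp only [mem_filter, mem_range, cycleZMod_adj, not_or]
  constructor
  · rintro ⟨hi, -, hik⟩
    refine lt_of_le_of_ne (Nat.le_of_lt_succ hi) fun h => hik ?_
    rw [h]
    push_cast
    ring
  · intro hi
    refine ⟨by omega, fun h => ?_, fun h => ?_⟩
    · rw [add_assoc, add_right_inj, ← Nat.cast_add_one,
        natCast_inj_of_lt (by omega) (by omega)] at h
      omega
    · rw [add_sub_assoc, add_right_inj, Nat.cast_add_one, add_sub_cancel_right,
        natCast_inj_of_lt (by omega) (by omega)] at h
      omega

theorem signedIndepPoly_cycleZMod_arc (a : ZMod N) :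
    ∀ k < N, (cycleZMod N).signedIndepPoly (arc a k) = Tnat (k + 1)
  | 0, _ => by rw [arc_zero, signedIndepPoly_empty]; rfl
  | k + 1, hk => by
    rw [signedIndepPoly_eq_sub _ ((arc_succ a k).symm ▸ mem_insert_self _ _), arc_succ,
      erase_insert (add_natCast_notMem_arc a (by omega)),
      signedIndepPoly_cycleZMod_arc a k (by omega)]
    cases k with
    | zero => rw [arc_zero, filter_empty, signedIndepPoly_empty]; rfl
    | succ j =>
      rw [filter_not_adj_arc a (by omega), signedIndepPoly_cycleZMod_arc a j (by omega)]
      rfl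

theorem filter_not_adj_zero :
    {x ∈ univ.erase (0 : ZMod N) | ¬ (cycleZMod N).Adj 0 x} = arc 2 (N - 3) := by
  have hfilter : {i ∈ range (N - 1) | ¬ (cycleZMod N).Adj 0 (1 + ((i : ℕ) : ZMod N))} =
      (range (N - 3)).image (fun j : ℕ => j + 1) := by
    ext (i : ℕ)
    have h1 : 1 + (i : ZMod N) = 0 + 1 ↔ N ∣ i := by
      rw [zero_add, add_eq_left, natCast_eq_zero_iff]
    have h2 : 1 + (i : ZMod N) = 0 - 1 ↔ N ∣ i + 2 := by
      rw [← natCast_eq_zero_iff]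
      push_cast
      constructor <;> intro h <;> linear_combination h
    simp only [mem_filter, mem_range, cycleZMod_adj, h1, h2, mem_image]
    constructor
    · rintro ⟨hi, h⟩
      have h0 : i ≠ 0 := by rintro rfl; exact h (Or.inl (dvd_zero N))
      have h2 : i + 2 ≠ N := fun h' => h (Or.inr (h' ▸ dvd_refl N))
      exact ⟨i - 1, by omega, by omega⟩
    · rintro ⟨j, hj, rfl⟩
      refine ⟨by omega, ?_⟩
      rintro (h | h) <;> have := Nat.le_of_dvd (by omega) h <;> omega
  rw [← arc_one_eq_erase_zero, arc, filter_image, hfilter, image_image, arc]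
  congr 1
  funext j
  simp only [Function.comp_apply]
  push_cast
  ring

theorem signedIndepPoly_cycleZMod_erase_zero :
    (cycleZMod N).signedIndepPoly (univ.erase 0) = Tnat N := by
  have hN : 1 < N := Fact.out
  rw [← arc_one_eq_erase_zero, signedIndepPoly_cycleZMod_arc 1 (N - 1) (by omega),
    Nat.sub_add_cancel hN.le]

theorem signedIndepPoly_cycleZMod_univ :
    (cycleZMod N).signedIndepPoly univ = Tnat N - X * Tnat (N - 2) := by
  have hN : 1 < N := Fact.out
  rw [signedIndepPoly_eq_sub _ (mem_univ 0), filter_not_adj_zero,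
    signedIndepPoly_cycleZMod_erase_zero, signedIndepPoly_cycleZMod_arc 2 (N - 3) (by omega)]
  -- `N - 3` truncates for `N = 2`, where `Tnat 1 = Tnat 0`
  obtain rfl | h : N = 2 ∨ 3 ≤ N := by omega
  · rfl
  · rw [show N - 3 + 1 = N - 2 by omega]

end SimpleGraph

theorem Tpoly_natCast_sub_one (k : ℕ) : Tpoly ((k : ℤ) - 1) = Tnat k := by
  simp [Tpoly]

theorem Tpoly_two_mul_sub_one (m : ℕ) : Tpoly (2 * (m : ℤ) - 1) = Tnat (2 * m) := by
  rw [← Tpoly_natCast_sub_one]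
  push_cast
  rfl

theorem Thatpoly_eq {m : ℕ} (hm : 1 ≤ m) :
    Thatpoly m = Tnat (2 * m) - X * Tnat (2 * m - 2) := by
  rw [Thatpoly, Tpoly_two_mul_sub_one,
    show 2 * (m : ℤ) - 3 = ((2 * m - 2 : ℕ) : ℤ) - 1 by omega, Tpoly_natCast_sub_one]

/-! ### Heaps of pieces over the cycle -/

namespace DirectedAnimal

open SimpleGraph

variable {N : ℕ} {A : Finset (ZMod N × ℕ)} {T : Finset (ZMod N)} {q r : ZMod N} {ℓ : ℕ}

def Supported (A : Finset (ZMod N × ℕ)) (q : ZMod N) (ℓ : ℕ) : Prop :=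
  (q - 1, ℓ - 1) ∈ A ∨ (q + 1, ℓ - 1) ∈ A ∨ (2 ≤ ℓ ∧ (q, ℓ - 2) ∈ A)

/-- Heaps of pieces over the cycle whose minimal pieces all lie in column `0`: the animals with
source `{0}`, together with the empty heap. -/
def IsHeap (A : Finset (ZMod N × ℕ)) : Prop :=
  (∀ x ∈ A, x.2 = 0 → x.1 = 0) ∧ ∀ x ∈ A, 1 ≤ x.2 → Supported A x.1 x.2

theorem isHeap_empty : IsHeap (∅ : Finset (ZMod N × ℕ)) :=
  ⟨by simp, by simp⟩

theorem Supported.mono {B : Finset (ZMod N × ℕ)} (h : Supported A q ℓ)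
    (hAB : A ⊆ B) : Supported B q ℓ :=
  h.imp (hAB ·) (Or.imp (hAB ·) (And.imp_right (hAB ·)))

theorem IsHeap.castHom_eq_of_mem (hN : 2 ∣ N) (hA : IsHeap A) (h : (q, ℓ) ∈ A) :
    ZMod.castHom hN (ZMod 2) q = ℓ := by
  induction ℓ using Nat.strong_induction_on generalizing q with
  | _ ℓ ih =>
  have h2 : (2 : ZMod 2) = 0 := rfl
  rcases Nat.eq_zero_or_pos ℓ with rfl | hℓ
  · rw [show q = 0 from hA.1 _ h rfl, map_zero, Nat.cast_zero]
  rcases hA.2 _ h hℓ with h' | h' | ⟨hℓ2, h'⟩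
  · have := ih _ (by omega) h'
    push_cast [map_sub, map_one, Nat.cast_sub hℓ] at this
    linear_combination this
  · have := ih _ (by omega) h'
    push_cast [map_add, map_one, Nat.cast_sub hℓ] at this
    linear_combination this - h2
  · have := ih _ (by omega) h'
    push_cast [Nat.cast_sub hℓ2] at this
    linear_combination this - h2

theorem IsHeap.snd_ne_of_adj (hN : 2 ∣ N) (hA : IsHeap A) {ℓ' : ℕ}
    (hq : (q, ℓ) ∈ A) (hr : (r, ℓ') ∈ A) (hqr : (cycleZMod N).Adj q r) : ℓ ≠ ℓ' := by
  rintro rfl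
  have h := (hA.castHom_eq_of_mem hN hr).trans (hA.castHom_eq_of_mem hN hq).symm
  rw [cycleZMod, SimpleGraph.fromRel_adj] at hqr
  rcases hqr.2 with rfl | rfl <;> rw [map_add, map_one] at h <;> simp at h

theorem IsHeap.succ_notMem (hN : 2 ∣ N) (hA : IsHeap A) (h : (q, ℓ) ∈ A) :
    (q, ℓ + 1) ∉ A := fun h' => by
  have := (hA.castHom_eq_of_mem hN h').symm.trans (hA.castHom_eq_of_mem hN h)
  push_cast at this
  simp at this

theorem IsHeap.snd_add_two_le_card (hA : IsHeap A) {x : ZMod N × ℕ} (hx : x ∈ A) :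
    x.2 + 2 ≤ 2 * #A := by
  suffices h : ∀ ℓ, ∀ x ∈ A, x.2 = ℓ → ℓ + 2 ≤ 2 * #{y ∈ A | y.2 ≤ ℓ} from
    (h _ x hx rfl).trans (Nat.mul_le_mul_left 2 (card_filter_le _ _))
  intro ℓ
  induction ℓ using Nat.strong_induction_on with
  | _ ℓ ih =>
  rintro x hx rfl
  rcases Nat.eq_zero_or_pos x.2 with h0 | hpos
  · have : 0 < #{y ∈ A | y.2 ≤ x.2} := card_pos.2 ⟨x, mem_filter.2 ⟨hx, le_rfl⟩⟩
    omega
  obtain ⟨y, hy, hlt, hle⟩ : ∃ y ∈ A, y.2 < x.2 ∧ x.2 ≤ y.2 + 2 := by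
    rcases hA.2 x hx hpos with h | h | ⟨h2, h⟩
    · exact ⟨_, h, by dsimp only; omega, by dsimp only; omega⟩
    · exact ⟨_, h, by dsimp only; omega, by dsimp only; omega⟩
    · exact ⟨_, h, by dsimp only; omega, by dsimp only; omega⟩
  have hsub : insert x {z ∈ A | z.2 ≤ y.2} ⊆ {z ∈ A | z.2 ≤ x.2} := by
    intro z hz
    rcases mem_insert.1 hz with rfl | hz
    · exact mem_filter.2 ⟨hx, le_rfl⟩
    · exact mem_filter.2 ⟨(mem_filter.1 hz).1, (mem_filter.1 hz).2.trans hlt.le⟩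
  have hcard := card_le_card hsub
  rw [card_insert_of_notMem (by simp only [mem_filter, not_and, not_le]; exact fun _ => hlt)]
    at hcard
  have := ih y.2 hlt y hy rfl
  omega

theorem finite_setOf_isHeap [NeZero N] (n : ℕ) :
    {A : Finset (ZMod N × ℕ) | IsHeap A ∧ #A = n}.Finite :=
  (univ ×ˢ range (2 * n)).powerset.finite_toSet.subset fun A ⟨hA, hn⟩ =>
    mem_powerset.2 fun x hx => mem_product.2
      ⟨mem_univ _, mem_range.2 (by have := hA.snd_add_two_le_card hx; omega)⟩

theorem IsHeap.zero_mem (hA : IsHeap A) (hne : A.Nonempty) : ((0 : ZMod N), 0) ∈ A := by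
  obtain ⟨x, hx, hmin⟩ := A.exists_min_image Prod.snd hne
  have h0 : x.2 = 0 := by
    by_contra h
    rcases hA.2 x hx (by omega) with h' | h' | ⟨-, h'⟩ <;> have := hmin _ h' <;>
      dsimp only at this <;> omega
  rwa [← hA.1 x hx h0, ← h0]

theorem isTriAnimalZ_iff : IsTriAnimalZ N {0} A ↔ IsHeap A ∧ A.Nonempty := by
  constructor
  · rintro ⟨h0, hsup⟩
    refine ⟨⟨fun x hx hx0 => mem_singleton.1 ((h0 x.1).1 ?_), hsup⟩,
      ⟨_, (h0 0).2 (mem_singleton_self 0)⟩⟩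
    rwa [← hx0]
  · rintro ⟨hA, hne⟩
    refine ⟨fun q => ⟨fun hq => mem_singleton.2 (hA.1 _ hq rfl), fun hq => ?_⟩, hA.2⟩
    rw [mem_singleton.1 hq]
    exact hA.zero_mem hne

theorem triCountZ_zero : triCountZ N {0} 0 = 0 := by
  have : {A : Finset (ZMod N × ℕ) | IsTriAnimalZ N {0} A ∧ #A = 0} = ∅ := by
    ext A
    simp only [Set.mem_ofPred_eq, isTriAnimalZ_iff, card_eq_zero, Set.mem_empty_iff_false,
      iff_false]
    rintro ⟨⟨-, hne⟩, rfl⟩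
    exact not_nonempty_empty hne
  rw [triCountZ, this, Set.ncard_empty]

noncomputable def landWeight (q : ZMod N) (x : ZMod N × ℕ) : ℕ :=
  if x.1 = q then x.2 + 2 else if (cycleZMod N).Adj q x.1 then x.2 + 1 else 0

/-- The level at which a piece dropped onto column `q` comes to rest on top of `A`. -/
noncomputable def landLevel (A : Finset (ZMod N × ℕ)) (q : ZMod N) : ℕ := A.sup (landWeight q)

theorem add_two_le_landLevel (h : (q, ℓ) ∈ A) : ℓ + 2 ≤ landLevel A q := by
  have : landWeight q (q, ℓ) = ℓ + 2 := if_pos rfl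
  exact this ▸ le_sup (f := landWeight q) h

theorem add_one_le_landLevel (h : (r, ℓ) ∈ A) (hqr : (cycleZMod N).Adj q r) :
    ℓ + 1 ≤ landLevel A q := by
  have : landWeight q (r, ℓ) = ℓ + 1 := by simp [landWeight, hqr.ne', hqr]
  exact this ▸ le_sup (f := landWeight q) h

theorem landLevel_le {c : ℕ} (hcol : ∀ ℓ, (q, ℓ) ∈ A → ℓ + 2 ≤ c)
    (hadj : ∀ r ℓ, (cycleZMod N).Adj q r → (r, ℓ) ∈ A → ℓ + 1 ≤ c) :
    landLevel A q ≤ c := by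
  refine Finset.sup_le fun x hx => ?_
  unfold landWeight
  split_ifs with h1 h2
  · exact hcol x.2 (h1 ▸ hx)
  · exact hadj x.1 x.2 h2 hx
  · exact Nat.zero_le c

theorem landLevel_mono {B : Finset (ZMod N × ℕ)} (h : A ⊆ B) :
    landLevel A q ≤ landLevel B q :=
  sup_mono h

theorem landLevel_insert (x : ZMod N × ℕ) :
    landLevel (insert x A) q = max (landWeight q x) (landLevel A q) :=
  sup_insert

theorem mk_landLevel_notMem : (q, landLevel A q) ∉ A := fun h => by
  have := add_two_le_landLevel h
  omega

theorem supported_landLevel (h : 0 < landLevel A q) : Supported A q (landLevel A q) := by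
  have hA : A.Nonempty := nonempty_of_ne_empty (by rintro rfl; simp [landLevel] at h)
  obtain ⟨x, hx, hsup⟩ := exists_mem_eq_sup A hA (landWeight q)
  rw [landLevel, hsup] at h ⊢
  unfold landWeight at h ⊢
  split_ifs at h ⊢ with h1 h2
  · refine Or.inr (Or.inr ⟨le_add_self, ?_⟩)
    rw [Nat.add_sub_cancel, ← h1]
    exact hx
  · rw [cycleZMod, SimpleGraph.fromRel_adj] at h2
    rw [Supported, Nat.add_sub_cancel]
    rcases h2.2 with h2 | h2
    · exact Or.inr (Or.inl (h2 ▸ hx))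
    · exact Or.inl (by rw [h2, add_sub_cancel_right]; exact hx)
  · exact absurd h (lt_irrefl 0)

theorem le_landLevel_of_supported [Fact (1 < N)] (h : Supported A q ℓ) :
    ℓ ≤ landLevel A q := by
  rcases h with h | h | ⟨h2, h⟩
  · have := add_one_le_landLevel h (cycleZMod_adj.2 (Or.inr rfl)); omega
  · have := add_one_le_landLevel h (cycleZMod_adj.2 (Or.inl rfl)); omega
  · have := add_two_le_landLevel h; omega

def IsTop (A : Finset (ZMod N × ℕ)) (q : ZMod N) (ℓ : ℕ) : Prop :=
  (q, ℓ) ∈ A ∧ ∀ x ∈ A, (x.1 = q ∨ (cycleZMod N).Adj q x.1) → x.2 ≤ ℓ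

theorem IsTop.supported_erase [Fact (1 < N)] (h : IsTop A q ℓ) {x : ZMod N × ℕ}
    (hx : x ∈ A) (hx1 : 1 ≤ x.2) (hs : Supported A x.1 x.2) :
    Supported (A.erase (q, ℓ)) x.1 x.2 := by
  rcases hs with hs | hs | ⟨h2, hs⟩
  · refine Or.inl (mem_erase.2 ⟨fun he => ?_, hs⟩)
    simp only [Prod.mk.injEq, sub_eq_iff_eq_add] at he
    have := h.2 x hx (Or.inr (cycleZMod_adj.2 (Or.inl he.1)))
    omega
  · refine Or.inr (Or.inl (mem_erase.2 ⟨fun he => ?_, hs⟩))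
    simp only [Prod.mk.injEq, ← eq_sub_iff_add_eq] at he
    have := h.2 x hx (Or.inr (cycleZMod_adj.2 (Or.inr he.1)))
    omega
  · refine Or.inr (Or.inr ⟨h2, mem_erase.2 ⟨fun he => ?_, hs⟩⟩)
    simp only [Prod.mk.injEq] at he
    have := h.2 x hx (Or.inl he.1)
    omega

theorem IsTop.isHeap_erase [Fact (1 < N)] (hA : IsHeap A) (h : IsTop A q ℓ) :
    IsHeap (A.erase (q, ℓ)) :=
  ⟨fun x hx => hA.1 x (mem_of_mem_erase hx), fun x hx hx1 =>
    h.supported_erase (mem_of_mem_erase hx) hx1 (hA.2 x (mem_of_mem_erase hx) hx1)⟩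

theorem IsTop.landLevel_erase [Fact (1 < N)] (hN : 2 ∣ N) (hA : IsHeap A) (h : IsTop A q ℓ) :
    landLevel (A.erase (q, ℓ)) q = ℓ := by
  refine le_antisymm (landLevel_le (fun ℓ' hℓ' => ?_) (fun r ℓ' hqr hr => ?_)) ?_
  · obtain ⟨hne, hmem⟩ := mem_erase.1 hℓ'
    have hle : ℓ' ≤ ℓ := h.2 _ hmem (Or.inl rfl)
    have hne' : ℓ' ≠ ℓ := fun e => hne (e ▸ rfl)
    have hsucc : ℓ' + 1 ≠ ℓ := fun e => hA.succ_notMem hN hmem (e ▸ h.1)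
    omega
  · have hmem := mem_of_mem_erase hr
    have hle : ℓ' ≤ ℓ := h.2 _ hmem (Or.inr hqr)
    have := hA.snd_ne_of_adj hN h.1 hmem hqr
    omega
  · rcases Nat.eq_zero_or_pos ℓ with rfl | hℓ
    · exact Nat.zero_le _
    · exact le_landLevel_of_supported (h.supported_erase h.1 hℓ (hA.2 _ h.1 hℓ))

theorem IsTop.landLevel_eq [Fact (1 < N)] (hN : 2 ∣ N) (hA : IsHeap A) (h : IsTop A q ℓ) :
    landLevel A q = ℓ + 2 := by
  rw [← insert_erase h.1, landLevel_insert, h.landLevel_erase hN hA, landWeight, if_pos rfl]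
  exact max_eq_left (by omega)

theorem isTop_insert_landLevel : IsTop (insert (q, landLevel A q) A) q (landLevel A q) := by
  refine ⟨mem_insert_self _ _, fun x hx hq => ?_⟩
  rcases mem_insert.1 hx with rfl | hx
  · exact le_rfl
  · rcases hq with hq | hq
    · have := add_two_le_landLevel (hq ▸ hx : (q, x.2) ∈ A)
      omega
    · have := add_one_le_landLevel (hx : (x.1, x.2) ∈ A) hq
      omega

theorem IsHeap.insert_landLevel (hA : IsHeap A) (h : q = 0 ∨ 0 < landLevel A q) :
    IsHeap (insert (q, landLevel A q) A) := by
  refine ⟨fun x hx h0 => ?_, fun x hx hx1 => ?_⟩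
  · rcases mem_insert.1 hx with rfl | hx
    · exact h.resolve_right (by dsimp only at h0; omega)
    · exact hA.1 x hx h0
  · rcases mem_insert.1 hx with rfl | hx
    · exact (supported_landLevel hx1).mono (subset_insert _ _)
    · exact (hA.2 x hx hx1).mono (subset_insert _ _)

/-! ### The sign-reversing involution -/

def Movable (A : Finset (ZMod N × ℕ)) (T : Finset (ZMod N)) (q : ZMod N) : Prop :=
  (q ∈ T ∧ (q = 0 ∨ 0 < landLevel A q)) ∨
    (q ∉ T ∧ (∀ r ∈ T, ¬ (cycleZMod N).Adj q r) ∧ ∃ ℓ, IsTop A q ℓ)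

/-- In the second case `(q, landLevel p.1 q - 2)` is the top piece of column `q`, if there is one
(`IsTop.landLevel_eq`). -/
noncomputable def toggle (q : ZMod N) (p : Finset (ZMod N × ℕ) × Finset (ZMod N)) :
    Finset (ZMod N × ℕ) × Finset (ZMod N) :=
  if q ∈ p.2 then (insert (q, landLevel p.1 q) p.1, p.2.erase q)
  else (p.1.erase (q, landLevel p.1 q - 2), insert q p.2)

theorem toggle_of_mem (h : q ∈ T) :
    toggle q (A, T) = (insert (q, landLevel A q) A, T.erase q) :=
  if_pos h

theorem toggle_of_notMem (h : q ∉ T) :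
    toggle q (A, T) = (A.erase (q, landLevel A q - 2), insert q T) :=
  if_neg h

theorem Movable.isHeap_toggle [Fact (1 < N)] (hN : 2 ∣ N) (hA : IsHeap A)
    (hq : Movable A T q) : IsHeap (toggle q (A, T)).1 := by
  rcases hq with ⟨hqT, hq0⟩ | ⟨hqT, -, ℓ, htop⟩
  · rw [toggle_of_mem hqT]
    exact hA.insert_landLevel hq0
  · rw [toggle_of_notMem hqT, htop.landLevel_eq hN hA, Nat.add_sub_cancel]
    exact htop.isHeap_erase hA

theorem Movable.isIndepSet_toggle (hT : (cycleZMod N).IsIndepSet (T : Set (ZMod N)))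
    (hq : Movable A T q) : (cycleZMod N).IsIndepSet ((toggle q (A, T)).2 : Set (ZMod N)) := by
  rcases hq with ⟨hqT, -⟩ | ⟨hqT, hqadj, -⟩
  · rw [toggle_of_mem hqT]
    exact hT.mono (coe_subset.2 (erase_subset _ _))
  · rw [toggle_of_notMem hqT, coe_insert]
    exact hT.insert fun s hs _ => ⟨hqadj s hs, fun h => hqadj s hs h.symm⟩

theorem Movable.card_add_card_toggle [Fact (1 < N)] (hN : 2 ∣ N) (hA : IsHeap A)
    (hq : Movable A T q) : #(toggle q (A, T)).1 + #(toggle q (A, T)).2 = #A + #T := by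
  rcases hq with ⟨hqT, -⟩ | ⟨hqT, -, ℓ, htop⟩
  · rw [toggle_of_mem hqT, card_insert_of_notMem mk_landLevel_notMem, card_erase_of_mem hqT]
    have := card_pos.2 ⟨q, hqT⟩
    omega
  · rw [toggle_of_notMem hqT, htop.landLevel_eq hN hA, Nat.add_sub_cancel,
      card_erase_of_mem htop.1, card_insert_of_notMem hqT]
    have := card_pos.2 ⟨_, htop.1⟩
    omega

theorem Movable.neg_one_pow_card_toggle (hq : Movable A T q) :
    (-1 : ℤ) ^ #(toggle q (A, T)).2 = -(-1) ^ #T := by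
  rcases hq with ⟨hqT, -⟩ | ⟨hqT, -⟩
  · rw [toggle_of_mem hqT, ← card_erase_add_one hqT, pow_succ]
    ring
  · rw [toggle_of_notMem hqT, card_insert_of_notMem hqT, pow_succ]
    ring

theorem Movable.movable_toggle [Fact (1 < N)] (hN : 2 ∣ N) (hA : IsHeap A)
    (hT : (cycleZMod N).IsIndepSet (T : Set (ZMod N))) (hq : Movable A T q) :
    Movable (toggle q (A, T)).1 (toggle q (A, T)).2 q := by
  rcases hq with ⟨hqT, -⟩ | ⟨hqT, -, ℓ, htop⟩
  · rw [toggle_of_mem hqT]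
    exact Or.inr ⟨notMem_erase q T, fun s hs hqs => hT hqT (mem_of_mem_erase hs) hqs.ne hqs,
      _, isTop_insert_landLevel⟩
  · rw [toggle_of_notMem hqT, htop.landLevel_eq hN hA, Nat.add_sub_cancel]
    refine Or.inl ⟨mem_insert_self q T, ?_⟩
    rw [htop.landLevel_erase hN hA]
    rcases Nat.eq_zero_or_pos ℓ with rfl | hℓ
    · exact Or.inl (hA.1 _ htop.1 rfl)
    · exact Or.inr hℓ

theorem Movable.of_movable_toggle (hT : (cycleZMod N).IsIndepSet (T : Set (ZMod N)))
    (hq : Movable A T q) (hr : Movable (toggle q (A, T)).1 (toggle q (A, T)).2 r) (hrq : r ≠ q) :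
    Movable A T r := by
  rcases hq with ⟨hqT, -⟩ | ⟨hqT, -⟩
  · rw [toggle_of_mem hqT] at hr
    rcases hr with ⟨hrT, hr0⟩ | ⟨hrT, hradj, ℓ, htop⟩
    · have hrT := mem_of_mem_erase hrT
      refine Or.inl ⟨hrT, hr0.imp_right fun hpos => Nat.pos_of_ne_zero fun h0 => ?_⟩
      rw [landLevel_insert, h0, max_eq_left (Nat.zero_le _), landWeight] at hpos
      split_ifs at hpos with h1 h2
      · exact hrq h1.symm
      · exact hT hrT hqT h2.ne h2
      · exact lt_irrefl 0 hpos
    · have hrA : (r, ℓ) ∈ A :=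
        (mem_insert.1 htop.1).resolve_left fun h => hrq (Prod.mk.inj h).1
      refine Or.inr ⟨fun h => hrT (mem_erase.2 ⟨hrq, h⟩), fun s hs hrs => ?_, ℓ, hrA,
        fun x hx => htop.2 x (mem_insert_of_mem hx)⟩
      by_cases hsq : s = q
      · subst hsq
        have h1 : landLevel A s ≤ ℓ := htop.2 _ (mem_insert_self _ _) (Or.inr hrs)
        have h2 := add_one_le_landLevel hrA hrs.symm
        omega
      · exact hradj s (mem_erase.2 ⟨hsq, hs⟩) hrs
  · rw [toggle_of_notMem hqT] at hr
    rcases hr with ⟨hrT, hr0⟩ | ⟨hrT, hradj, ℓ, htop⟩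
    · exact Or.inl ⟨(mem_insert.1 hrT).resolve_left hrq,
        hr0.imp_right fun h => h.trans_le (landLevel_mono (erase_subset _ _))⟩
    · refine Or.inr ⟨fun h => hrT (mem_insert_of_mem h),
        fun s hs => hradj s (mem_insert_of_mem hs), ℓ, mem_of_mem_erase htop.1,
        fun x hx hxr => ?_⟩
      by_cases hx' : x = (q, landLevel A q - 2)
      · subst hx'
        exact (hxr.elim (fun h => hrq h.symm) (hradj q (mem_insert_self q T))).elim
      · exact htop.2 x (mem_erase.2 ⟨hx', hx⟩) hxr

theorem Movable.toggle_toggle [Fact (1 < N)] (hN : 2 ∣ N) (hA : IsHeap A)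
    (hq : Movable A T q) : toggle q (toggle q (A, T)) = (A, T) := by
  rcases hq with ⟨hqT, -⟩ | ⟨hqT, -, ℓ, htop⟩
  · have hlev : landLevel (insert (q, landLevel A q) A) q - 2 = landLevel A q := by
      rw [landLevel_insert, landWeight, if_pos rfl, max_eq_left (by omega)]
      omega
    rw [toggle_of_mem hqT, toggle_of_notMem (notMem_erase q T), hlev,
      erase_insert mk_landLevel_notMem, insert_erase hqT]
  · rw [toggle_of_notMem hqT, htop.landLevel_eq hN hA, Nat.add_sub_cancel,
      toggle_of_mem (mem_insert_self q T), htop.landLevel_erase hN hA, insert_erase htop.1,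
      erase_insert hqT]

section Pivot

variable {S : Finset (ZMod N)}

noncomputable def pivot (S : Finset (ZMod N)) : ZMod N :=
  if h : S.Nonempty then (S.exists_min_image ZMod.val h).choose else 0

theorem pivot_mem (h : S.Nonempty) : pivot S ∈ S := by
  rw [pivot, dif_pos h]
  exact (S.exists_min_image ZMod.val h).choose_spec.1

theorem val_pivot_le (hq : q ∈ S) : (pivot S).val ≤ q.val := by
  rw [pivot, dif_pos ⟨q, hq⟩]
  exact (S.exists_min_image ZMod.val ⟨q, hq⟩).choose_spec.2 q hq

theorem pivot_eq [NeZero N] (hq : q ∈ S) (hmin : ∀ r ∈ S, q.val ≤ r.val) : pivot S = q :=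
  ZMod.val_injective N (le_antisymm (val_pivot_le hq) (hmin _ (pivot_mem ⟨q, hq⟩)))

end Pivot

theorem exists_movable_iff : (∃ q, Movable A T q) ↔ A.Nonempty ∨ 0 ∈ T := by
  constructor
  · rintro ⟨q, ⟨hqT, hq0 | hpos⟩ | ⟨-, -, ℓ, htop⟩⟩
    · exact Or.inr (hq0 ▸ hqT)
    · refine Or.inl (nonempty_iff_ne_empty.2 ?_)
      rintro rfl
      exact lt_irrefl 0 hpos
    · exact Or.inl ⟨_, htop.1⟩
  · rintro (hA | h0)
    · obtain ⟨x, hx, hmax⟩ := A.exists_max_image Prod.snd hA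
      by_cases hxT : x.1 ∈ T
      · have := add_two_le_landLevel (hx : (x.1, x.2) ∈ A)
        exact ⟨x.1, Or.inl ⟨hxT, Or.inr (by omega)⟩⟩
      by_cases hadj : ∃ s ∈ T, (cycleZMod N).Adj x.1 s
      · obtain ⟨s, hs, hxs⟩ := hadj
        have := add_one_le_landLevel (hx : (x.1, x.2) ∈ A) hxs.symm
        exact ⟨s, Or.inl ⟨hs, Or.inr (by omega)⟩⟩
      · simp only [not_exists, not_and] at hadj
        exact ⟨x.1, Or.inr ⟨hxT, hadj, x.2, hx, fun y hy _ => hmax y hy⟩⟩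
    · exact ⟨0, Or.inl ⟨h0, Or.inl rfl⟩⟩

noncomputable def move [NeZero N] (p : Finset (ZMod N × ℕ) × Finset (ZMod N)) :
    Finset (ZMod N × ℕ) × Finset (ZMod N) :=
  toggle (pivot {q | Movable p.1 p.2 q}) p

theorem movable_pivot [NeZero N] (hne : A.Nonempty ∨ 0 ∈ T) :
    Movable A T (pivot {q | Movable A T q}) := by
  obtain ⟨q₀, hq₀⟩ := exists_movable_iff.2 hne
  exact (mem_filter.1 (pivot_mem ⟨q₀, mem_filter.2 ⟨mem_univ _, hq₀⟩⟩)).2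

theorem pivot_move [Fact (1 < N)] (hN : 2 ∣ N) (hA : IsHeap A)
    (hT : (cycleZMod N).IsIndepSet (T : Set (ZMod N))) (hne : A.Nonempty ∨ 0 ∈ T) :
    pivot {r | Movable (move (A, T)).1 (move (A, T)).2 r} = pivot {q | Movable A T q} := by
  have hq := movable_pivot hne
  refine pivot_eq (by simpa [move] using hq.movable_toggle hN hA hT) fun r hr => ?_
  by_cases hrq : r = pivot {q | Movable A T q}
  · rw [hrq]
  · exact val_pivot_le (by simpa using hq.of_movable_toggle hT (by simpa [move] using hr) hrq)

theorem move_move [Fact (1 < N)] (hN : 2 ∣ N) (hA : IsHeap A)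
    (hT : (cycleZMod N).IsIndepSet (T : Set (ZMod N))) (hne : A.Nonempty ∨ 0 ∈ T) :
    move (move (A, T)) = (A, T) := by
  conv_lhs => rw [move, pivot_move hN hA hT hne]
  exact (movable_pivot hne).toggle_toggle hN hA

/-! ### Generating functions -/

section GeneratingFunction

variable [NeZero N] {n : ℕ}

noncomputable def heapsOfCard (N : ℕ) [NeZero N] (n : ℕ) : Finset (Finset (ZMod N × ℕ)) :=
  (finite_setOf_isHeap n).toFinset

theorem mem_heapsOfCard : A ∈ heapsOfCard N n ↔ IsHeap A ∧ #A = n :=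
  Set.Finite.mem_toFinset _

noncomputable def heapGF (N : ℕ) [NeZero N] : PowerSeries ℤ :=
  PowerSeries.mk fun n => (#(heapsOfCard N n) : ℤ)

noncomputable def heapIndepPairs (N : ℕ) [NeZero N] (n : ℕ) :
    Finset (Finset (ZMod N × ℕ) × Finset (ZMod N)) :=
  (antidiagonal n).biUnion fun kl =>
    heapsOfCard N kl.1 ×ˢ
      {T ∈ (univ : Finset (ZMod N)).powerset | (cycleZMod N).IsIndepSet (T : Finset (ZMod N)) ∧
        #T = kl.2}

theorem mem_heapIndepPairs {p : Finset (ZMod N × ℕ) × Finset (ZMod N)} :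
    p ∈ heapIndepPairs N n ↔
      IsHeap p.1 ∧ (cycleZMod N).IsIndepSet (p.2 : Set (ZMod N)) ∧ #p.1 + #p.2 = n := by
  simp only [heapIndepPairs, mem_biUnion, HasAntidiagonal.mem_antidiagonal, mem_product,
    mem_heapsOfCard, mem_filter, mem_powerset, subset_univ, true_and]
  constructor
  · rintro ⟨kl, hkl, ⟨hA, h1⟩, hT, h2⟩
    exact ⟨hA, hT, by rw [h1, h2, hkl]⟩
  · rintro ⟨hA, hT, rfl⟩
    exact ⟨(#p.1, #p.2), rfl, ⟨hA, rfl⟩, hT, rfl⟩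

theorem coeff_heapGF_mul (n : ℕ) :
    PowerSeries.coeff n (heapGF N * ((cycleZMod N).signedIndepPoly univ : PowerSeries ℤ)) =
      ∑ p ∈ heapIndepPairs N n, (-1) ^ #p.2 := by
  rw [PowerSeries.coeff_mul, heapIndepPairs, sum_biUnion]
  · refine sum_congr rfl fun kl _ => ?_
    rw [heapGF, PowerSeries.coeff_mk, Polynomial.coeff_coe, SimpleGraph.coeff_signedIndepPoly,
      sum_product]
    simp only [sum_const, nsmul_eq_mul]
  · intro kl _ kl' _ hne
    simp only [Function.onFun, Finset.disjoint_left, mem_product, mem_heapsOfCard, mem_filter]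
    rintro p ⟨⟨-, h1⟩, -, -, h2⟩ ⟨⟨-, h1'⟩, -, -, h2'⟩
    exact hne (Prod.ext (h1.symm.trans h1') (h2.symm.trans h2'))

theorem sum_heapIndepPairs_filter_nonempty [Fact (1 < N)] (hN : 2 ∣ N) (n : ℕ) :
    ∑ p ∈ heapIndepPairs N n with p.1.Nonempty ∨ 0 ∈ p.2, (-1 : ℤ) ^ #p.2 = 0 := by
  have key : ∀ p ∈ {p ∈ heapIndepPairs N n | p.1.Nonempty ∨ 0 ∈ p.2},
      move p ∈ {p ∈ heapIndepPairs N n | p.1.Nonempty ∨ 0 ∈ p.2} ∧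
        (-1 : ℤ) ^ #(move p).2 = -(-1) ^ #p.2 ∧ move (move p) = p := by
    rintro ⟨A, T⟩ hp
    obtain ⟨hp, hne⟩ := mem_filter.1 hp
    obtain ⟨hA, hT, hcard⟩ := mem_heapIndepPairs.1 hp
    have hq := movable_pivot hne
    refine ⟨mem_filter.2 ⟨mem_heapIndepPairs.2 ⟨hq.isHeap_toggle hN hA,
      hq.isIndepSet_toggle hT, (hq.card_add_card_toggle hN hA).trans hcard⟩, ?_⟩,
      hq.neg_one_pow_card_toggle, move_move hN hA hT hne⟩
    exact exists_movable_iff.1 ⟨_, hq.movable_toggle hN hA hT⟩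
  refine sum_involution (fun p _ => move p) (fun p hp => by rw [(key p hp).2.1, add_neg_cancel])
    (fun p hp hp0 hfix => hp0 ?_) (fun p hp => (key p hp).1) (fun p hp => (key p hp).2.2)
  have h := (key p hp).2.1
  rw [hfix] at h
  linarith

theorem sum_heapIndepPairs_filter_not (n : ℕ) :
    ∑ p ∈ heapIndepPairs N n with ¬(p.1.Nonempty ∨ 0 ∈ p.2), (-1 : ℤ) ^ #p.2 =
      ∑ T ∈ (univ.erase 0).powerset with
        (cycleZMod N).IsIndepSet (T : Finset (ZMod N)) ∧ #T = n, (-1) ^ #T := by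
  refine sum_nbij' Prod.snd (fun T => (∅, T)) (fun p hp => ?_) (fun T hT => ?_) (fun p hp => ?_)
    (fun T _ => rfl) (fun p _ => rfl)
  · obtain ⟨hp, hfix⟩ := mem_filter.1 hp
    rw [not_or, not_nonempty_iff_eq_empty] at hfix
    obtain ⟨-, hT, hcard⟩ := mem_heapIndepPairs.1 hp
    rw [hfix.1, card_empty, zero_add] at hcard
    refine mem_filter.2 ⟨mem_powerset.2 fun q hq => ?_, hT, hcard⟩
    exact mem_erase.2 ⟨fun h => hfix.2 (h ▸ hq), mem_univ q⟩
  · obtain ⟨hsub, hT, hcard⟩ := mem_filter.1 hT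
    refine mem_filter.2
      ⟨mem_heapIndepPairs.2 ⟨isHeap_empty, hT, by rw [card_empty, zero_add, hcard]⟩, ?_⟩
    simpa using fun h => notMem_erase 0 univ (mem_powerset.1 hsub h)
  · obtain ⟨-, hfix⟩ := mem_filter.1 hp
    rw [not_or, not_nonempty_iff_eq_empty] at hfix
    exact Prod.ext hfix.1.symm rfl

theorem heapGF_mul_signedIndepPoly [Fact (1 < N)] (hN : 2 ∣ N) :
    heapGF N * ((cycleZMod N).signedIndepPoly univ : PowerSeries ℤ) =
      (cycleZMod N).signedIndepPoly (univ.erase 0) := by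
  ext n
  rw [coeff_heapGF_mul, Polynomial.coeff_coe, SimpleGraph.coeff_signedIndepPoly,
    ← sum_filter_add_sum_filter_not (heapIndepPairs N n) (fun p => p.1.Nonempty ∨ 0 ∈ p.2),
    sum_heapIndepPairs_filter_nonempty hN, zero_add, sum_heapIndepPairs_filter_not]

theorem heapsOfCard_zero : heapsOfCard N 0 = {∅} := by
  ext A
  rw [mem_heapsOfCard, mem_singleton, card_eq_zero, and_iff_right_iff_imp]
  rintro rfl
  exact isHeap_empty

theorem triCountZ_eq_card_heapsOfCard (hn : n ≠ 0) :
    triCountZ N {0} n = #(heapsOfCard N n) := by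
  rw [triCountZ, heapsOfCard, ← Set.ncard_eq_toFinset_card _ (finite_setOf_isHeap n)]
  congr 1
  ext A
  simp only [Set.mem_ofPred_eq, isTriAnimalZ_iff, and_assoc, and_congr_right_iff]
  exact fun _ => ⟨And.right, fun h => ⟨card_pos.1 (h ▸ Nat.pos_of_ne_zero hn), h⟩⟩

theorem one_add_triGFZ_eq_heapGF : 1 + triGFZ N {0} = heapGF N := by
  ext n
  rw [map_add, PowerSeries.coeff_one, triGFZ, heapGF, PowerSeries.coeff_mk, PowerSeries.coeff_mk]
  rcases eq_or_ne n 0 with rfl | hn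
  · simp [triCountZ_zero, heapsOfCard_zero]
  · rw [if_neg hn, zero_add, triCountZ_eq_card_heapsOfCard hn]

end GeneratingFunction

end DirectedAnimal

theorem stmt8 (m : ℕ) (hm : 1 ≤ m) :
    (1 + triGFZ (2 * m) {0}) * ((Thatpoly m : Polynomial ℤ) : PowerSeries ℤ)
      = ((Tpoly (2 * (m : ℤ) - 1) : Polynomial ℤ) : PowerSeries ℤ) := by
  have : Fact (1 < 2 * m) := ⟨by omega⟩
  rw [DirectedAnimal.one_add_triGFZ_eq_heapGF, Thatpoly_eq hm,
    ← SimpleGraph.signedIndepPoly_cycleZMod_univ, Tpoly_two_mul_sub_one,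
    ← SimpleGraph.signedIndepPoly_cycleZMod_erase_zero]
  exact DirectedAnimal.heapGF_mul_signedIndepPoly (dvd_mul_right 2 m)
end
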